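/- arXiv:math/9702227 — 8 statements merged into one kernel-verified Lean document; each statement's English description precedes it below -/
import Mathlib

section
/- For every k ≥ 1, the circulant digraph Cay(ℤ₁₂ₖ; 6k, 6k+2, 6k+3) has no hamiltonian circuit. -/
/-!
Write each step of the circuit as `σ v = v + 6k + ε v` with excess `ε v ∈ {0, 2, 3}`, and let
`a, b, c` count the vertices of excess `0, 2, 3`. The steps sum to `0` in `ℤ/12k`, so
`2b + 3c = 12k·m` with `m ≤ 3`. If `c = 0` every step is even, and if `b = 0` every step is a
multiple of 3; either way the circuit never reaches `1` from `0`. This settles `m = 0` and `m = 3`,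
and also `m = 1`: two consecutive `6k`-steps would close a 2-cycle, so `2a ≤ 12k`, forcing `c = 0`.

For `m = 2` we get `c = 2a`. Since `σ` is injective, an excess-3 vertex is never followed by one of
excess 2, nor three places later by one of excess 0, and an excess-2 vertex is never followed two
places later by one of excess 0. Hence three consecutive excess-3 vertices would propagate all
around `ℤ/12k`, and every excess-3 vertex lies one or two places before an excess-0 vertex whose
predecessor has excess 3. Counting, `c = 2a` forces every excess-0 vertex `u` to be preceded by two
vertices of excess 3. Then `σ` followed by the translation by `-(6k + 2)` rotates each block
`u - 2 → u - 1 → u → u - 2` and fixes the excess-2 vertices, so its cube is the identity and it is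
even. The translation is the square of the translation by `-(3k + 1)`, hence even, so `σ` is even,
whereas a cycle of even length `12k` is odd.
-/

open Finset

namespace Equiv.Perm

variable {α β : Type*} {σ : Perm α}

theorem isCycleOn_univ_of_forall_exists_pow_apply_eq (h : ∀ x y, ∃ i : ℕ, (σ ^ i) x = y) :
    σ.IsCycleOn _root_.Set.univ :=
  ⟨σ.bijective.bijOn_univ, fun x _ y _ ↦
    let ⟨i, hi⟩ := h x y
    ⟨i, by rwa [zpow_natCast]⟩⟩

theorem SameCycle.apply_eq_apply_of_invariant {f : α → β} (hf : ∀ x, f (σ x) = f x)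
    {x y : α} (h : σ.SameCycle x y) : f x = f y := by
  obtain ⟨i, rfl⟩ := h
  induction i using Int.induction_on with
  | zero => rfl
  | succ i ih => rw [ih, add_comm, zpow_add, zpow_one, mul_apply, hf]
  | pred i ih =>
    rw [ih, sub_eq_neg_add, zpow_add, zpow_neg_one, mul_apply, ← hf (σ⁻¹ _), ← mul_apply σ,
      mul_inv_cancel, one_apply]

theorem IsCycleOn.apply_apply_ne [Fintype α] (hσ : σ.IsCycleOn _root_.Set.univ)
    (hα : 2 < Fintype.card α) (x : α) : σ (σ x) ≠ x := by
  rw [← Finset.coe_univ] at hσ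
  rw [← mul_apply, ← sq, Ne, hσ.pow_apply_eq (mem_univ x)]
  exact fun h ↦ hα.not_ge (Nat.le_of_dvd two_pos h)

theorem IsCycleOn.sign_eq_neg_one_pow_card [Fintype α] [DecidableEq α] [Nontrivial α]
    (hσ : σ.IsCycleOn _root_.Set.univ) : sign σ = -(-1) ^ Fintype.card α := by
  have hfix (x : α) : σ x ≠ x := hσ.apply_ne Set.nontrivial_univ (Set.mem_univ x)
  have hcycle : σ.IsCycle :=
    isCycle_iff_exists_isCycleOn.2
      ⟨_root_.Set.univ, Set.nontrivial_univ, hσ, fun x _ ↦ Set.mem_univ x⟩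
  have hsupp : σ.support = univ := eq_univ_of_forall fun x ↦ mem_support.2 (hfix x)
  rw [hcycle.sign, hsupp, card_univ]

theorem sign_eq_one_of_pow_eq_one [Fintype α] [DecidableEq α] {n : ℕ} (hn : Odd n)
    (h : σ ^ n = 1) : sign σ = 1 := by
  rw [← pow_one (sign σ), ← Nat.odd_iff.1 hn, ← Int.units_pow_eq_pow_mod_two, ← map_pow, h,
    map_one]

theorem sign_addRight_add_self {G : Type*} [AddGroup G] [Fintype G] [DecidableEq G] (a : G) :
    sign (Equiv.addRight (a + a)) = 1 := by
  rw [addRight_add, sign_mul, Int.units_mul_self]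

end Equiv.Perm

theorem ZMod.forall_of_forall_imp_add_one {n : ℕ} [NeZero n] {P : ZMod n → Prop}
    (h : ∀ u, P u → P (u + 1)) {v : ZMod n} (hv : P v) (u : ZMod n) : P u := by
  have hall (j : ℕ) : P (v + j) := by
    induction j with
    | zero => simpa using hv
    | succ j ih => simpa [add_assoc] using h _ ih
  simpa using hall (u - v).val

namespace Circulant

open Equiv.Perm

variable {k : ℕ} {σ : Equiv.Perm (ZMod (12 * k))} {ε : ZMod (12 * k) → ℕ}

theorem lt_twelve_mul [NeZero k] {j : ℕ} (hj : j < 12) : j < 12 * k := by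
  have := NeZero.one_le (n := k)
  omega

theorem exists_excess (hstep : ∀ v : ZMod (12 * k), σ v - v ∈
      ({((6 * k : ℕ) : ZMod (12 * k)), ((6 * k + 2 : ℕ) : ZMod (12 * k)),
        ((6 * k + 3 : ℕ) : ZMod (12 * k))} : Set (ZMod (12 * k)))) :
    ∃ ε : ZMod (12 * k) → ℕ, (∀ v, ε v = 0 ∨ ε v = 2 ∨ ε v = 3) ∧
      ∀ v, σ v = v + 6 * k + ε v := by
  have (v : ZMod (12 * k)) : ∃ j : ℕ, (j = 0 ∨ j = 2 ∨ j = 3) ∧ σ v = v + 6 * k + j := by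
    have h := hstep v
    simp only [Set.mem_insert_iff, Set.mem_singleton_iff] at h
    rcases h with h | h | h <;> push_cast at h
    · exact ⟨0, by simp, by push_cast; linear_combination h⟩
    · exact ⟨2, by simp, by push_cast; linear_combination h⟩
    · exact ⟨3, by simp, by push_cast; linear_combination h⟩
  choose ε hε hσ using this
  exact ⟨ε, hε, hσ⟩

theorem excess_add_add_ne (hσ : ∀ v, σ v = v + 6 * k + ε v) {j : ℕ} (hj₀ : 0 < j)
    (hj : j < 12 * k) (v : ZMod (12 * k)) : ε (v + j) + j ≠ ε v := by
  intro h
  have : σ (v + j) = σ v := by rw [hσ, hσ, ← h]; push_cast; ring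
  have hj_zero : (j : ZMod (12 * k)) = 0 := by simpa using σ.injective this
  exact hj.not_ge (Nat.le_of_dvd hj₀ ((ZMod.natCast_eq_zero_iff _ _).1 hj_zero))

theorem excess_add_one_ne_two [NeZero k] (hσ : ∀ v, σ v = v + 6 * k + ε v) {v : ZMod (12 * k)}
    (hv : ε v = 3) : ε (v + 1) ≠ 2 := by
  have := excess_add_add_ne hσ (j := 1) one_pos (lt_twelve_mul (by norm_num)) v
  simp only [Nat.cast_one] at this
  omega

theorem excess_add_two_ne_zero [NeZero k] (hσ : ∀ v, σ v = v + 6 * k + ε v) {v : ZMod (12 * k)}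
    (hv : ε v = 2) : ε (v + 2) ≠ 0 := by
  have := excess_add_add_ne hσ (j := 2) two_pos (lt_twelve_mul (by norm_num)) v
  simp only [Nat.cast_ofNat] at this
  omega

theorem excess_add_three_ne_zero [NeZero k] (hσ : ∀ v, σ v = v + 6 * k + ε v)
    {v : ZMod (12 * k)} (hv : ε v = 3) : ε (v + 3) ≠ 0 := by
  have := excess_add_add_ne hσ (j := 3) three_pos (lt_twelve_mul (by norm_num)) v
  simp only [Nat.cast_ofNat] at this
  omega

theorem excess_add_six_mul_ne_zero [NeZero k] (hcyc : σ.IsCycleOn Set.univ)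
    (hσ : ∀ v, σ v = v + 6 * k + ε v) {v : ZMod (12 * k)} (hv : ε v = 0) :
    ε (v + 6 * k) ≠ 0 := by
  intro hv'
  refine hcyc.apply_apply_ne ((ZMod.card (12 * k)).symm ▸ lt_twelve_mul (by norm_num)) v ?_
  have h12 : (12 * k : ZMod (12 * k)) = 0 := by exact_mod_cast ZMod.natCast_self (12 * k)
  rw [hσ v, hv, Nat.cast_zero, add_zero, hσ, hv']
  linear_combination h12

theorem false_of_forall_dvd_excess [NeZero k] (hcyc : σ.IsCycleOn Set.univ)
    (hσ : ∀ v, σ v = v + 6 * k + ε v) {p : ℕ} (hp : p ∣ 6 * k) (hp₁ : p ≠ 1)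
    (hε : ∀ v, p ∣ ε v) : False := by
  have : Nontrivial (ZMod p) := ZMod.nontrivial_iff.2 hp₁
  let φ := ZMod.castHom (hp.trans ⟨2, by ring⟩ : p ∣ 12 * k) (ZMod p)
  have hφ (v : ZMod (12 * k)) : φ (σ v) = φ v := by
    have h6k : ((6 * k : ℕ) : ZMod p) = 0 := (ZMod.natCast_eq_zero_iff _ _).2 hp
    have hεv : (ε v : ZMod p) = 0 := (ZMod.natCast_eq_zero_iff _ _).2 (hε v)
    push_cast at h6k
    simp only [hσ, map_add, map_mul, map_natCast, map_ofNat, h6k, hεv, add_zero]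
  have := (hcyc.2 (Set.mem_univ 0) (Set.mem_univ 1)).apply_eq_apply_of_invariant hφ
  rw [map_zero, map_one] at this
  exact zero_ne_one this

theorem false_of_forall_excess_ne_three [NeZero k] (hcyc : σ.IsCycleOn Set.univ)
    (hσ : ∀ v, σ v = v + 6 * k + ε v) (hε : ∀ v, ε v = 0 ∨ ε v = 2 ∨ ε v = 3)
    (hne : ∀ v, ε v ≠ 3) : False :=
  false_of_forall_dvd_excess hcyc hσ (p := 2) ⟨3 * k, by ring⟩ (by norm_num) fun v ↦ by
    have := hε v; have := hne v; omega

theorem false_of_forall_excess_ne_two [NeZero k] (hcyc : σ.IsCycleOn Set.univ)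
    (hσ : ∀ v, σ v = v + 6 * k + ε v) (hε : ∀ v, ε v = 0 ∨ ε v = 2 ∨ ε v = 3)
    (hne : ∀ v, ε v ≠ 2) : False :=
  false_of_forall_dvd_excess hcyc hσ (p := 3) ⟨2 * k, by ring⟩ (by norm_num) fun v ↦ by
    have := hε v; have := hne v; omega

theorem card_excess_zero_add_card_two_add_card_three [NeZero k]
    (hε : ∀ v, ε v = 0 ∨ ε v = 2 ∨ ε v = 3) :
    #{v | ε v = 0} + #{v | ε v = 2} + #{v | ε v = 3} = 12 * k := by
  simp only [card_filter, ← sum_add_distrib]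
  rw [sum_congr rfl fun v _ ↦ show _ = 1 by rcases hε v with h | h | h <;> simp [h],
    sum_const, card_univ, ZMod.card, smul_eq_mul, mul_one]

theorem sum_excess [NeZero k] (hε : ∀ v, ε v = 0 ∨ ε v = 2 ∨ ε v = 3) :
    ∑ v, ε v = 2 * #{v | ε v = 2} + 3 * #{v | ε v = 3} := by
  simp only [card_filter, mul_sum, ← sum_add_distrib]
  exact sum_congr rfl fun v _ ↦ by rcases hε v with h | h | h <;> simp [h]

theorem dvd_sum_excess [NeZero k] (hσ : ∀ v, σ v = v + 6 * k + ε v) :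
    12 * k ∣ ∑ v, ε v := by
  rw [← ZMod.natCast_eq_zero_iff, Nat.cast_sum,
    sum_congr rfl fun v _ ↦ show (ε v : ZMod (12 * k)) = σ v - v - 6 * k by rw [hσ]; ring,
    sum_sub_distrib, sum_sub_distrib, Equiv.sum_comp σ (fun v ↦ v), sub_self, zero_sub,
    sum_const, card_univ, ZMod.card, nsmul_eq_mul, neg_eq_zero]
  exact_mod_cast by simp

theorem exists_two_mul_card_add_three_mul_card_eq [NeZero k] (hσ : ∀ v, σ v = v + 6 * k + ε v)
    (hε : ∀ v, ε v = 0 ∨ ε v = 2 ∨ ε v = 3) :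
    ∃ m ≤ 3, 2 * #{v | ε v = 2} + 3 * #{v | ε v = 3} = m * (12 * k) := by
  obtain ⟨m, hm⟩ := sum_excess hε ▸ dvd_sum_excess hσ
  have hcard := card_excess_zero_add_card_two_add_card_three hε
  have hm3 : m ≤ 3 := by
    by_contra! h
    have : 12 * k * 4 ≤ 12 * k * m := Nat.mul_le_mul_left (12 * k) h
    linarith [NeZero.one_le (n := k)]
  exact ⟨m, hm3, by rw [hm, mul_comm]⟩

theorem two_mul_card_excess_zero_le [NeZero k] (hcyc : σ.IsCycleOn Set.univ)
    (hσ : ∀ v, σ v = v + 6 * k + ε v) : 2 * #{v | ε v = 0} ≤ 12 * k := by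
  set A : Finset (ZMod (12 * k)) := {v | ε v = 0}
  have hdisj : Disjoint A (A.image (· + 6 * k)) := by
    rw [disjoint_left]
    intro v hv hv'
    simp only [A, mem_image, mem_filter, mem_univ, true_and] at hv hv'
    obtain ⟨w, hw, rfl⟩ := hv'
    exact excess_add_six_mul_ne_zero hcyc hσ hw hv
  calc 2 * #A = #(A ∪ A.image (· + 6 * k)) := by
        rw [card_union_of_disjoint hdisj, card_image_of_injective _ (add_left_injective _),
          two_mul]
    _ ≤ 12 * k := (card_le_univ _).trans_eq (ZMod.card _)

theorem excess_add_two_ne_three [NeZero k] (hcyc : σ.IsCycleOn Set.univ)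
    (hσ : ∀ v, σ v = v + 6 * k + ε v) (hε : ∀ v, ε v = 0 ∨ ε v = 2 ∨ ε v = 3)
    {v : ZMod (12 * k)} (h₀ : ε v = 3) (h₁ : ε (v + 1) = 3) : ε (v + 2) ≠ 3 := by
  intro h₂
  have hshift (u : ZMod (12 * k)) :
      ε u = 3 ∧ ε (u + 1) = 3 ∧ ε (u + 2) = 3 →
        ε (u + 1) = 3 ∧ ε (u + 1 + 1) = 3 ∧ ε (u + 1 + 2) = 3 := by
    rintro ⟨hu₀, hu₁, hu₂⟩
    have hne₀ := excess_add_three_ne_zero hσ hu₀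
    have hne₂ := excess_add_one_ne_two hσ hu₂
    rw [add_assoc, one_add_one_eq_two, add_assoc, show (1 + 2 : ZMod (12 * k)) = 3 by norm_num]
    rw [add_assoc, show (2 + 1 : ZMod (12 * k)) = 3 by norm_num] at hne₂
    have := hε (u + 3)
    exact ⟨hu₁, hu₂, by omega⟩
  refine false_of_forall_excess_ne_two hcyc hσ hε fun u ↦ ?_
  have := (ZMod.forall_of_forall_imp_add_one hshift ⟨h₀, h₁, h₂⟩ u).1
  omega

theorem excess_add_one_eq_zero_or [NeZero k] (hcyc : σ.IsCycleOn Set.univ)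
    (hσ : ∀ v, σ v = v + 6 * k + ε v) (hε : ∀ v, ε v = 0 ∨ ε v = 2 ∨ ε v = 3)
    {v : ZMod (12 * k)} (hv : ε v = 3) :
    ε (v + 1) = 0 ∨ ε (v + 1) = 3 ∧ ε (v + 2) = 0 := by
  have hne₁ := excess_add_one_ne_two hσ hv
  rcases hε (v + 1) with h₁ | h₁ | h₁
  · exact .inl h₁
  · exact absurd h₁ hne₁
  have hne₂ := excess_add_one_ne_two hσ h₁
  have hne₃ := excess_add_two_ne_three hcyc hσ hε hv h₁
  rw [add_assoc, one_add_one_eq_two] at hne₂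
  have := hε (v + 2)
  omega

theorem card_excess_three_le [NeZero k] (hcyc : σ.IsCycleOn Set.univ)
    (hσ : ∀ v, σ v = v + 6 * k + ε v) (hε : ∀ v, ε v = 0 ∨ ε v = 2 ∨ ε v = 3) :
    #{v | ε v = 3} ≤ 2 * #{u | ε u = 0 ∧ ε (u - 1) = 3} := by
  set Z : Finset (ZMod (12 * k)) := {u | ε u = 0 ∧ ε (u - 1) = 3}
  have hsub : ({v | ε v = 3} : Finset _) ⊆ Z.image (· - 1) ∪ Z.image (· - 2) := by
    intro v hv
    simp only [Z, mem_union, mem_image, mem_filter, mem_univ, true_and] at hv ⊢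
    rcases excess_add_one_eq_zero_or hcyc hσ hε hv with h₁ | ⟨h₁, h₂⟩
    · exact .inl ⟨v + 1, ⟨h₁, by rwa [add_sub_cancel_right]⟩, add_sub_cancel_right v 1⟩
    · refine .inr ⟨v + 2, ⟨h₂, ?_⟩, add_sub_cancel_right v 2⟩
      rwa [show v + 2 - 1 = v + 1 by ring]
  calc #{v | ε v = 3} ≤ #(Z.image (· - 1) ∪ Z.image (· - 2)) := card_le_card hsub
    _ ≤ #Z + #Z := (card_union_le _ _).trans (add_le_add card_image_le card_image_le)
    _ = 2 * #Z := (two_mul _).symm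

theorem excess_sub_eq_three_of_card_eq [NeZero k] (hcyc : σ.IsCycleOn Set.univ)
    (hσ : ∀ v, σ v = v + 6 * k + ε v) (hε : ∀ v, ε v = 0 ∨ ε v = 2 ∨ ε v = 3)
    (hc : #{v | ε v = 3} = 2 * #{v | ε v = 0}) {u : ZMod (12 * k)} (hu : ε u = 0) :
    ε (u - 1) = 3 ∧ ε (u - 2) = 3 := by
  have hZ : ({u | ε u = 0 ∧ ε (u - 1) = 3} : Finset (ZMod (12 * k))) =
      ({u | ε u = 0} : Finset _) := by
    refine eq_of_subset_of_card_le (fun u hu ↦ ?_) ?_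
    · simp only [mem_filter] at hu ⊢
      exact ⟨hu.1, hu.2.1⟩
    · have := card_excess_three_le hcyc hσ hε
      omega
  have hpred {u : ZMod (12 * k)} (hu : ε u = 0) : ε (u - 1) = 3 := by
    have : u ∈ ({u | ε u = 0} : Finset _) := by simpa
    rw [← hZ, mem_filter] at this
    exact this.2.2
  refine ⟨hpred hu, ?_⟩
  rcases hε (u - 2) with h | h | h
  · have := excess_add_three_ne_zero hσ (hpred h)
    rw [show u - 2 - 1 + 3 = u by ring] at this
    exact absurd hu this
  · have := excess_add_two_ne_zero hσ h
    rw [sub_add_cancel] at this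
    exact absurd hu this
  · exact h

theorem addRight_mul_pow_three_eq_one [NeZero k] (hcyc : σ.IsCycleOn Set.univ)
    (hσ : ∀ v, σ v = v + 6 * k + ε v) (hε : ∀ v, ε v = 0 ∨ ε v = 2 ∨ ε v = 3)
    (hc : #{v | ε v = 3} = 2 * #{v | ε v = 0}) :
    (Equiv.addRight (-(6 * k + 2) : ZMod (12 * k)) * σ) ^ 3 = 1 := by
  set κ := Equiv.addRight (-(6 * k + 2) : ZMod (12 * k)) * σ
  have hκ (v : ZMod (12 * k)) : κ v = v + ε v - 2 := by
    simp only [κ, mul_apply, Equiv.coe_addRight, hσ]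
    ring
  have hκ₀ {v : ZMod (12 * k)} (hv : ε v = 0) : κ v = v - 2 := by simp [hκ, hv]
  have hκ₂ {v : ZMod (12 * k)} (hv : ε v = 2) : κ v = v := by simp [hκ, hv]
  have hκ₃ {v : ZMod (12 * k)} (hv : ε v = 3) : κ v = v + 1 := by rw [hκ, hv]; push_cast; ring
  ext v
  simp only [pow_succ, pow_zero, one_mul, mul_apply, one_apply]
  rcases hε v with hv | hv | hv
  · obtain ⟨h₁, h₂⟩ := excess_sub_eq_three_of_card_eq hcyc hσ hε hc hv
    rw [hκ₀ hv, hκ₃ h₂, show v - 2 + 1 = v - 1 by ring, hκ₃ h₁, sub_add_cancel]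
  · rw [hκ₂ hv, hκ₂ hv, hκ₂ hv]
  · rcases excess_add_one_eq_zero_or hcyc hσ hε hv with h₁ | ⟨h₁, h₂⟩
    · have h₃ := (excess_sub_eq_three_of_card_eq hcyc hσ hε hc h₁).2
      rw [hκ₃ hv, hκ₀ h₁, hκ₃ h₃, show v + 1 - 2 + 1 = v by ring]
    · rw [hκ₃ hv, hκ₃ h₁, add_assoc, one_add_one_eq_two, hκ₀ h₂, add_sub_cancel_right]

theorem false_of_card_excess_three_eq [NeZero k] (hcyc : σ.IsCycleOn Set.univ)
    (hσ : ∀ v, σ v = v + 6 * k + ε v) (hε : ∀ v, ε v = 0 ∨ ε v = 2 ∨ ε v = 3)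
    (hc : #{v | ε v = 3} = 2 * #{v | ε v = 0}) : False := by
  have : Nontrivial (ZMod (12 * k)) :=
    ZMod.nontrivial_iff.2 (lt_twelve_mul (j := 1) (by norm_num)).ne'
  have hsign_neg : sign σ = -1 := by
    rw [hcyc.sign_eq_neg_one_pow_card, ZMod.card, show 12 * k = 2 * (6 * k) by ring, pow_mul]
    simp
  have hsign_pos : sign σ = 1 := by
    have hsq : (-(6 * k + 2) : ZMod (12 * k)) = -(3 * k + 1) + -(3 * k + 1) := by ring
    have := sign_eq_one_of_pow_eq_one (by decide) (addRight_mul_pow_three_eq_one hcyc hσ hε hc)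
    rwa [Equiv.Perm.sign_mul, hsq, sign_addRight_add_self, one_mul] at this
  rw [hsign_neg] at hsign_pos
  exact absurd hsign_pos (by decide)

end Circulant

open Circulant

/-- For every `k ≥ 1`, the circulant digraph
`Cay(ℤ₁₂ₖ; 6k, 6k+2, 6k+3)` has no hamiltonian circuit. -/
theorem no_ham_circuit_twelve_k (k : ℕ) (hk : 1 ≤ k) :
    ¬ ∃ σ : Equiv.Perm (ZMod (12 * k)),
      (∀ v : ZMod (12 * k), σ v - v ∈
        ({((6 * k : ℕ) : ZMod (12 * k)), ((6 * k + 2 : ℕ) : ZMod (12 * k)),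
          ((6 * k + 3 : ℕ) : ZMod (12 * k))} : Set (ZMod (12 * k)))) ∧
      (∀ v w : ZMod (12 * k), ∃ i : ℕ, (σ ^ i) v = w) := by
  rintro ⟨σ, hstep, htrans⟩
  have : NeZero k := ⟨by omega⟩
  have hcyc := Equiv.Perm.isCycleOn_univ_of_forall_exists_pow_apply_eq htrans
  obtain ⟨ε, hε, hσ⟩ := exists_excess hstep
  have hcard := card_excess_zero_add_card_two_add_card_three hε
  have hzero := two_mul_card_excess_zero_le hcyc hσ
  have forall_ne_of_card_eq_zero {j : ℕ} (h : #{v | ε v = j} = 0) (v) : ε v ≠ j :=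
    card_filter_eq_zero_iff.1 h v (mem_univ v)
  obtain ⟨m, hm, h⟩ := exists_two_mul_card_add_three_mul_card_eq hσ hε
  interval_cases m
  · exact false_of_forall_excess_ne_three hcyc hσ hε (forall_ne_of_card_eq_zero (by omega))
  · exact false_of_forall_excess_ne_three hcyc hσ hε (forall_ne_of_card_eq_zero (by omega))
  · exact false_of_card_excess_three_eq hcyc hσ hε (by omega)
  · exact false_of_forall_excess_ne_two hcyc hσ hε (forall_ne_of_card_eq_zero (by omega))
end

section
/- The circulant digraph Cay(ℤ₁₂; 3, 4, 6) has no hamiltonian circuit. -/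
/-!
A hamiltonian circuit `σ` gives the closed walk `0, σ 0, σ² 0, …, σ¹² 0 = 0` with steps in
`{3, 4, 6}` whose inner vertices are pairwise distinct and different from `0`. A depth-first
search over the step sequences, abandoning a branch as soon as a vertex repeats, shows that no
such walk exists.
-/

open Function

section FreshWalk

variable {V : Type*} [DecidableEq V]

/-- Decides whether there is a walk `v = w 0 → w 1 → ⋯ → w n = t` along `succ` whose inner
vertices `w 1, …, w (n - 1)` are pairwise distinct and avoid `visited`. -/
def freshWalkSearch (succ : V → List V) (t : V) : List V → V → ℕ → Bool
  | _, v, 0 => decide (v = t)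
  | _, v, 1 => decide (t ∈ succ v)
  | visited, v, n + 2 =>
    (succ v).any fun u => decide (u ∉ visited) && freshWalkSearch succ t (u :: visited) u (n + 1)

theorem freshWalkSearch_eq_true {succ : V → List V} {t : V} (n : ℕ) (visited : List V)
    (w : ℕ → V) (hstep : ∀ i < n, w (i + 1) ∈ succ (w i)) (hend : w n = t)
    (hfresh : ∀ i ∈ Set.Ico 1 n, w i ∉ visited) (hinj : Set.InjOn w (Set.Ico 1 n)) :
    freshWalkSearch succ t visited (w 0) n = true := by
  induction n generalizing visited w with
  | zero => simpa [freshWalkSearch] using hend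
  | succ n ih =>
    rcases n with _ | n
    · simpa [freshWalkSearch, ← hend] using hstep 0 one_pos
    have htail : freshWalkSearch succ t (w 1 :: visited) (w 1) (n + 1) = true := by
      refine ih _ (fun i => w (i + 1)) (fun i hi => hstep (i + 1) (by omega)) hend ?_ ?_
      · rintro i ⟨hi1, hin⟩
        simp only [List.mem_cons, not_or]
        refine ⟨fun h => ?_, hfresh (i + 1) ⟨by omega, by omega⟩⟩
        have := hinj ⟨by omega, by omega⟩ ⟨le_rfl, by omega⟩ h
        omega
      · rintro i ⟨hi1, hin⟩ j ⟨hj1, hjn⟩ h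
        have := hinj (x₁ := i + 1) (x₂ := j + 1) ⟨by omega, by omega⟩ ⟨by omega, by omega⟩ h
        omega
    simp only [freshWalkSearch, List.any_eq_true, Bool.and_eq_true, decide_eq_true_eq]
    exact ⟨w 1, hstep 0 (by omega), hfresh 1 ⟨le_rfl, by omega⟩, htail⟩

end FreshWalk

namespace Equiv.Perm

variable {α : Type*} [Fintype α] {σ : Perm α} {v : α}

theorem minimalPeriod_eq_card_of_forall_exists_pow_apply_eq (h : ∀ w, ∃ i : ℕ, (σ ^ i) v = w) :
    minimalPeriod σ v = Fintype.card α := by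
  classical
  have hv : v ∈ periodicPts σ := σ.injective.mem_periodicPts v
  refine le_antisymm minimalPeriod_le_card ?_
  calc Fintype.card α = (Finset.univ : Finset α).card := Finset.card_univ.symm
    _ ≤ ((Finset.range (minimalPeriod σ v)).image fun i => σ^[i] v).card := by
      refine Finset.card_le_card fun w _ => ?_
      obtain ⟨i, rfl⟩ := h w
      refine Finset.mem_image.2 ⟨i % minimalPeriod σ v, ?_, ?_⟩
      · exact Finset.mem_range.2 (Nat.mod_lt _ (minimalPeriod_pos_of_mem_periodicPts hv))
      · rw [iterate_mod_minimalPeriod_eq, iterate_eq_pow]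
    _ ≤ minimalPeriod σ v := Finset.card_image_le.trans (Finset.card_range _).le

theorem pow_card_apply_eq_self_of_forall_exists_pow_apply_eq (h : ∀ w, ∃ i : ℕ, (σ ^ i) v = w) :
    (σ ^ Fintype.card α) v = v := by
  rw [← minimalPeriod_eq_card_of_forall_exists_pow_apply_eq h, ← iterate_eq_pow]
  exact isPeriodicPt_minimalPeriod σ v

theorem injOn_pow_apply_Iio_of_forall_exists_pow_apply_eq (h : ∀ w, ∃ i : ℕ, (σ ^ i) v = w) :
    Set.InjOn (fun i => (σ ^ i) v) (Set.Iio (Fintype.card α)) := by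
  simpa only [← minimalPeriod_eq_card_of_forall_exists_pow_apply_eq h, ← iterate_eq_pow]
    using iterate_injOn_Iio_minimalPeriod

theorem freshWalkSearch_card_eq_true_of_forall_exists_pow_apply_eq [DecidableEq α]
    {succ : α → List α} (hsucc : ∀ u, σ u ∈ succ u) (h : ∀ w, ∃ i : ℕ, (σ ^ i) v = w) :
    freshWalkSearch succ v [v] v (Fintype.card α) = true := by
  have hinj := injOn_pow_apply_Iio_of_forall_exists_pow_apply_eq h
  refine freshWalkSearch_eq_true (w := fun i => (σ ^ i) v) _ _
    (fun i _ => by simpa only [pow_succ', mul_apply] using hsucc _)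
    (pow_card_apply_eq_self_of_forall_exists_pow_apply_eq h)
    (fun i hi => ?_) (hinj.mono fun i hi => hi.2)
  simpa using hinj.ne (x := i) (y := 0) hi.2 (Fintype.card_pos_iff.2 ⟨v⟩) (by have := hi.1; omega)

end Equiv.Perm

theorem freshWalkSearch_zmod12_346 :
    freshWalkSearch (fun u : ZMod 12 => [u + 3, u + 4, u + 6]) 0 [0] 0 12 = false := by
  decide

/-- The circulant digraph `Cay(ℤ₁₂; 3, 4, 6)` has no hamiltonian circuit. -/
theorem no_ham_circuit_Z12_346 :
    ¬ ∃ σ : Equiv.Perm (ZMod 12),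
      (∀ v : ZMod 12, σ v - v ∈ ({3, 4, 6} : Set (ZMod 12))) ∧
      (∀ v w : ZMod 12, ∃ i : ℕ, (σ ^ i) v = w) := by
  rintro ⟨σ, hstep, hcycle⟩
  have hsucc (u : ZMod 12) : σ u ∈ [u + 3, u + 4, u + 6] := by
    have h := hstep u
    simp only [Set.mem_insert_iff, Set.mem_singleton_iff] at h
    rcases h with h | h | h <;> simp [eq_add_of_sub_eq' h]
  have hwalk := σ.freshWalkSearch_card_eq_true_of_forall_exists_pow_apply_eq hsucc (hcycle 0)
  rw [ZMod.card, freshWalkSearch_zmod12_346] at hwalk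
  exact Bool.false_ne_true hwalk
end

section
/- Suppose gcd(a−b, 12k) = 1 and either 2a−3b ≡ 6k (mod 12k) or 3a−2b ≡ 6k (mod 12k). Then Cay(ℤ₁₂ₖ; 6k, a, b) has no hamiltonian circuit. -/
/-!
Multiplying by the unit `(a - b)⁻¹` or its negative fixes `6k` and maps `{a, b}` onto
`{6k + 2, 6k + 3}`, so it suffices to treat `Cay(ℤ₁₂ₖ; 6k, 6k + 2, 6k + 3)`. Write the step at `v`
as `6k + s v` with `s v ∈ {0, 2, 3}`. The steps sum to `0`, so `∑ s = 12k c` with `c ≤ 3`. Two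
consecutive `6k`-steps would close a 2-cycle, so `s v + s (σ v) ≥ 2` and `c ≥ 1`. For `c = 1` all
steps are even and for `c = 3` all equal `6k + 3`; neither generates `ℤ₁₂ₖ`. For `c = 2`, the
permutation `π = τ^(6k-3) ∘ σ` (`τ` the translation by `1`) moves `v` by `s v - 3 ∈ {-3, -1, 0}`,
with total `-12k`. Every nontrivial cycle of `π` has total displacement a negative multiple of
`12k`, so `π` is a single cycle, supported on the even-sized set `{s ≠ 3}`; hence `sign π = -1`,
while `sign τ^(6k-3) · sign σ = (-1) · (-1) = 1`.
-/

open Finset Equiv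

namespace Equiv.Perm

variable {G : Type*} [AddCommGroup G]

/-- A hamiltonian circuit of `Cay(G; A)`, encoded by its successor permutation `σ`. -/
def IsHamiltonianCircuit (σ : Perm G) (A : Set G) : Prop :=
  (∀ v, σ v - v ∈ A) ∧ ∀ v w, ∃ i : ℕ, (σ ^ i) v = w

namespace IsHamiltonianCircuit

variable {σ : Perm G} {A : Set G}

theorem mono {B : Set G} (h : σ.IsHamiltonianCircuit A) (hB : ∀ v, σ v - v ∈ B) :
    σ.IsHamiltonianCircuit B :=
  ⟨hB, h.2⟩

theorem permCongr {H : Type*} [AddCommGroup H] (h : σ.IsHamiltonianCircuit A) (e : G ≃+ H)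
    {B : Set H} (hB : ∀ x ∈ A, e x ∈ B) : (e.toEquiv.permCongr σ).IsHamiltonianCircuit B := by
  have hpow (i : ℕ) : e.toEquiv.permCongr σ ^ i = e.toEquiv.permCongr (σ ^ i) :=
    (map_pow e.toEquiv.permCongrHom σ i).symm
  refine ⟨fun v => ?_, fun v w => ?_⟩
  · have := hB _ (h.1 (e.symm v))
    rwa [map_sub, AddEquiv.apply_symm_apply] at this
  · obtain ⟨i, hi⟩ := h.2 (e.symm v) (e.symm w)
    refine ⟨i, ?_⟩
    rw [hpow, permCongr_apply]
    simp [hi]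

theorem eq_top_of_forall_sub_mem (h : σ.IsHamiltonianCircuit A) (K : AddSubgroup G)
    (hK : ∀ v, σ v - v ∈ K) : K = ⊤ := by
  have hpow (v : G) (i : ℕ) : (σ ^ i) v - v ∈ K := by
    induction i with
    | zero => simp
    | succ i ih =>
      rw [pow_succ', mul_apply, ← sub_add_sub_cancel]
      exact K.add_mem (hK _) ih
  refine eq_top_iff.2 fun w _ => ?_
  obtain ⟨i, hi⟩ := h.2 0 w
  simpa [hi] using hpow 0 i

theorem eq_zero_of_mul_sub_eq_zero {R : Type*} [Ring R] {σ : Perm R} {A : Set R}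
    (h : σ.IsHamiltonianCircuit A) (d : R) (hd : ∀ v, d * (σ v - v) = 0) : d = 0 := by
  have h1 : (1 : R) ∈ (AddMonoidHom.mulLeft d).ker :=
    h.eq_top_of_forall_sub_mem (AddMonoidHom.mulLeft d).ker hd ▸ AddSubgroup.mem_top 1
  simpa using h1

variable [Fintype G]

theorem apply_apply_ne (h : σ.IsHamiltonianCircuit A) (hG : 2 < Fintype.card G) (v : G) :
    σ (σ v) ≠ v := by
  classical
  intro hv
  have horbit (i : ℕ) : (σ ^ i) v ∈ ({v, σ v} : Finset G) := by
    induction i with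
    | zero => simp
    | succ i ih =>
      rw [pow_succ', mul_apply]
      rcases mem_insert.1 ih with h' | h' <;> simp_all
  have : Fintype.card G ≤ 2 :=
    calc Fintype.card G ≤ #{v, σ v} :=
          card_le_card fun w _ => (h.2 v w).elim fun i hi => hi ▸ horbit i
      _ ≤ 2 := card_le_two
  omega

theorem apply_ne (h : σ.IsHamiltonianCircuit A) (hG : 1 < Fintype.card G) (v : G) :
    σ v ≠ v := by
  intro hv
  have hpow (i : ℕ) : (σ ^ i) v = v := by
    induction i with
    | zero => rfl
    | succ i ih => rw [pow_succ', mul_apply, ih, hv]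
  obtain ⟨w, hw⟩ := Fintype.exists_ne_of_one_lt_card hG v
  obtain ⟨i, hi⟩ := h.2 v w
  exact hw (hi ▸ hpow i)

theorem isCycle (h : σ.IsHamiltonianCircuit A) (hG : 1 < Fintype.card G) : σ.IsCycle := by
  obtain ⟨v⟩ : Nonempty G := Fintype.card_pos_iff.1 (by omega)
  refine ⟨v, h.apply_ne hG v, fun w _ => ?_⟩
  obtain ⟨i, hi⟩ := h.2 v w
  exact ⟨i, by simpa using hi⟩

theorem sign_eq [DecidableEq G] (h : σ.IsHamiltonianCircuit A) (hG : 1 < Fintype.card G) :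
    sign σ = -(-1) ^ Fintype.card G := by
  have : σ.support = univ := eq_univ_of_forall fun v => mem_support.2 (h.apply_ne hG v)
  rw [(h.isCycle hG).sign, this, card_univ]

end IsHamiltonianCircuit

theorem sum_apply_sub_eq_zero (π : Perm G) {T : Finset G} (hT : ∀ v, v ∈ T ↔ π v ∈ T) :
    ∑ v ∈ T, (π v - v) = 0 := by
  rw [sum_sub_distrib, sub_eq_zero]
  exact sum_equiv π hT fun _ _ => rfl

end Equiv.Perm

namespace ZMod

variable {n : ℕ}

theorem isHamiltonianCircuit_addLeft_one [NeZero n] :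
    (Equiv.addLeft (1 : ZMod n)).IsHamiltonianCircuit {1} := by
  refine ⟨fun v => by simp, fun v w => ⟨(w - v).val, ?_⟩⟩
  simp [Equiv.nsmul_addLeft]

theorem sign_addLeft_natCast [NeZero n] (hn : Even n) (c : ℕ) :
    Perm.sign (Equiv.addLeft (c : ZMod n)) = (-1) ^ c := by
  have hn1 : 1 < Fintype.card (ZMod n) := by
    obtain ⟨m, rfl⟩ := hn
    have := NeZero.ne (m + m)
    rw [ZMod.card]; omega
  rw [← nsmul_one, ← Equiv.nsmul_addLeft, map_pow,
    isHamiltonianCircuit_addLeft_one.sign_eq hn1, ZMod.card, hn.neg_one_pow]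

theorem natCast_mul_unit_of_two_mul_eq {m : ℕ} (h : 2 * m = n) (u : (ZMod n)ˣ) :
    (m : ZMod n) * u = m := by
  subst h
  rcases Nat.eq_zero_or_pos m with rfl | hm
  · simp
  have : NeZero (2 * m) := ⟨by omega⟩
  obtain ⟨j, hj⟩ : Odd (u : ZMod (2 * m)).val :=
    Nat.coprime_two_right.1 ((ZMod.val_coe_unit_coprime u).coprime_dvd_right (dvd_mul_right 2 m))
  rw [← ZMod.natCast_zmod_val (u : ZMod (2 * m)), hj]
  have h0 : (2 * m : ZMod (2 * m)) = 0 := by exact_mod_cast ZMod.natCast_self (2 * m)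
  push_cast
  linear_combination (j : ZMod (2 * m)) * h0

theorem natCast_ne_zero_of_pos_of_lt {m : ℕ} (hm : 0 < m) (hlt : m < n) : (m : ZMod n) ≠ 0 :=
  fun h => hm.ne' (by simpa [h] using (val_natCast_of_lt hlt).symm)

theorem natCast_add_self_of_two_mul_eq {m : ℕ} (h : 2 * m = n) : (m : ZMod n) + m = 0 := by
  rw [← Nat.cast_add, ← two_mul, h, natCast_self]

end ZMod

namespace Equiv.Perm

-- `w v` is an integer lift of the displacement `π v - v`.
variable {n : ℕ} {π : Perm (ZMod n)} {w : ZMod n → ℤ}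

theorem apply_eq_self_iff_displacement_eq_zero (hw : ∀ v, (w v : ZMod n) = π v - v) {v : ZMod n}
    (hv : |w v| < n) : π v = v ↔ w v = 0 := by
  rw [← sub_eq_zero, ← hw, ZMod.intCast_zmod_eq_zero_iff_dvd]
  exact ⟨fun hd => Int.eq_zero_of_abs_lt_dvd hd hv, fun h => h ▸ dvd_zero _⟩

variable [NeZero n]

theorem sum_sameCycle_displacement_le_neg (hw : ∀ v, (w v : ZMod n) = π v - v)
    (hw_abs : ∀ v, |w v| < n) (hw_nonpos : ∀ v, w v ≤ 0) {x : ZMod n} (hx : π x ≠ x) :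
    ∑ v ∈ {v | π.SameCycle x v}, w v ≤ -n := by
  set T : Finset (ZMod n) := {v | π.SameCycle x v}
  have hdvd : (n : ℤ) ∣ ∑ v ∈ T, w v := by
    rw [← ZMod.intCast_zmod_eq_zero_iff_dvd, Int.cast_sum]
    simp_rw [hw]
    exact π.sum_apply_sub_eq_zero fun v => by simp [T]
  have hneg : ∑ v ∈ T, w v < 0 := by
    have hx' : w x < 0 :=
      lt_of_le_of_ne (hw_nonpos x) ((apply_eq_self_iff_displacement_eq_zero hw (hw_abs x)).not.1 hx)
    rw [← add_sum_erase T w (mem_filter.2 ⟨mem_univ x, SameCycle.refl π x⟩)]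
    linarith [sum_nonpos fun v (_ : v ∈ T.erase x) => hw_nonpos v]
  obtain ⟨t, ht⟩ := hdvd
  have hpos : (0 : ℤ) < n := by exact_mod_cast NeZero.pos n
  rw [ht] at hneg ⊢
  have : t ≤ -1 := by
    by_contra! h
    nlinarith
  nlinarith

theorem isCycle_of_sum_displacement_eq_neg (hw : ∀ v, (w v : ZMod n) = π v - v)
    (hw_abs : ∀ v, |w v| < n) (hw_nonpos : ∀ v, w v ≤ 0) (hsum : ∑ v, w v = -n) :
    π.IsCycle := by
  have hmoved {x} : π x ≠ x ↔ w x ≠ 0 := (apply_eq_self_iff_displacement_eq_zero hw (hw_abs x)).not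
  obtain ⟨x, -, hx⟩ := exists_ne_zero_of_sum_ne_zero (hsum.trans_ne (by simp [NeZero.ne n]))
  refine ⟨x, hmoved.2 hx, fun y hy => ?_⟩
  by_contra hxy
  have hdisj : _root_.Disjoint ({v | π.SameCycle x v} : Finset (ZMod n))
      ({v | π.SameCycle y v} : Finset (ZMod n)) :=
    disjoint_filter.2 fun v _ hxv hyv => hxy (hxv.trans hyv.symm)
  have hunion : ∑ v, w v ≤ ∑ v ∈ ({v | π.SameCycle x v} : Finset (ZMod n)) ∪
      ({v | π.SameCycle y v} : Finset (ZMod n)), w v :=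
    sum_le_sum_of_subset_of_nonpos' (subset_univ _) fun v _ _ => hw_nonpos v
  rw [sum_union hdisj] at hunion
  linarith [sum_sameCycle_displacement_le_neg hw hw_abs hw_nonpos (hmoved.2 hx),
    sum_sameCycle_displacement_le_neg hw hw_abs hw_nonpos hy, (NeZero.pos n)]

end Equiv.Perm

section SixMul

variable {k : ℕ}

local notation "M" => ((6 * k : ℕ) : ZMod (12 * k))

theorem exists_unit_mul_mem_six_mul {a b : ZMod (12 * k)} (hab : IsUnit (a - b))
    (hcong : 2 * a - 3 * b = M ∨ 3 * a - 2 * b = M) :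
    ∃ x : (ZMod (12 * k))ˣ, ∀ y ∈ ({M, a, b} : Set (ZMod (12 * k))),
      (x : ZMod (12 * k)) * y ∈ ({M, M + 2, M + 3} : Set (ZMod (12 * k))) := by
  obtain ⟨u, hu⟩ := hab
  have ht : (↑u⁻¹ : ZMod (12 * k)) * (a - b) = 1 := by rw [← hu, Units.inv_mul]
  have hMt := ZMod.natCast_mul_unit_of_two_mul_eq (m := 6 * k) (n := 12 * k) (by ring) u⁻¹
  have hMM := ZMod.natCast_add_self_of_two_mul_eq (m := 6 * k) (n := 12 * k) (by ring)
  simp only [Set.mem_insert_iff, Set.mem_singleton_iff, forall_eq_or_imp, forall_eq]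
  rcases hcong with hc | hc
  · refine ⟨u⁻¹, Or.inl ((mul_comm _ _).trans hMt), Or.inr (Or.inr ?_), Or.inr (Or.inl ?_)⟩
    · linear_combination 3 * ht - (↑u⁻¹ : ZMod (12 * k)) * hc - hMt - hMM
    · linear_combination 2 * ht - (↑u⁻¹ : ZMod (12 * k)) * hc - hMt - hMM
  · refine ⟨-u⁻¹, ?_⟩
    rw [Units.val_neg]
    refine ⟨Or.inl ?_, Or.inr (Or.inl ?_), Or.inr (Or.inr ?_)⟩
    · linear_combination -hMt - hMM
    · linear_combination 2 * ht - (↑u⁻¹ : ZMod (12 * k)) * hc - hMt - hMM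
    · linear_combination 3 * ht - (↑u⁻¹ : ZMod (12 * k)) * hc - hMt - hMM

variable [NeZero k] {σ : Perm (ZMod (12 * k))}

theorem not_isHamiltonianCircuit_even_steps : ¬ σ.IsHamiltonianCircuit {M, M + 2} := by
  intro h
  refine ZMod.natCast_ne_zero_of_pos_of_lt (m := 6 * k) (by have := NeZero.pos k; omega)
    (by have := NeZero.pos k; omega) (h.eq_zero_of_mul_sub_eq_zero _ fun v => ?_)
  rcases h.1 v with hv | hv <;> rw [hv]
  · exact_mod_cast (ZMod.natCast_eq_zero_iff _ _).2 ⟨3 * k, by ring⟩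
  · exact_mod_cast (ZMod.natCast_eq_zero_iff _ _).2 ⟨3 * k + 1, by ring⟩

theorem not_isHamiltonianCircuit_six_mul_add_three : ¬ σ.IsHamiltonianCircuit {M + 3} := by
  intro h
  refine ZMod.natCast_ne_zero_of_pos_of_lt (m := 4 * k) (by have := NeZero.pos k; omega)
    (by have := NeZero.pos k; omega) (h.eq_zero_of_mul_sub_eq_zero _ fun v => ?_)
  rw [h.1 v]
  exact_mod_cast (ZMod.natCast_eq_zero_iff _ _).2 ⟨2 * k + 1, by ring⟩

variable {s : ZMod (12 * k) → ℕ}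

theorem dvd_sum_weights (hs : ∀ v, σ v - v = M + s v) : 12 * k ∣ ∑ v, s v := by
  have h := σ.sum_apply_sub_eq_zero (T := univ) (by simp)
  simp_rw [hs, sum_add_distrib, sum_const, card_univ, card_nsmul_eq_zero, zero_add,
    ← Nat.cast_sum, ZMod.natCast_eq_zero_iff] at h
  exact h

theorem two_le_weight_add_weight_apply {A : Set (ZMod (12 * k))} (h : σ.IsHamiltonianCircuit A)
    (hs : ∀ v, σ v - v = M + s v) (hs3 : ∀ v, s v = 0 ∨ s v = 2 ∨ s v = 3) (v : ZMod (12 * k)) :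
    2 ≤ s v + s (σ v) := by
  by_contra! hlt
  have h0 : s v = 0 ∧ s (σ v) = 0 := by
    rcases hs3 v with h1 | h1 | h1 <;> rcases hs3 (σ v) with h2 | h2 | h2 <;> omega
  refine h.apply_apply_ne (by rw [ZMod.card]; have := NeZero.pos k; omega) v ?_
  have h1 := hs v
  have h2 := hs (σ v)
  rw [h0.1, Nat.cast_zero, add_zero] at h1
  rw [h0.2, Nat.cast_zero, add_zero] at h2
  linear_combination h2 + h1 +
    ZMod.natCast_add_self_of_two_mul_eq (n := 12 * k) (m := 6 * k) (by ring)

theorem sign_addLeft_mul_eq_one {A : Set (ZMod (12 * k))} (h : σ.IsHamiltonianCircuit A) :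
    Perm.sign (Equiv.addLeft ((6 * k - 3 : ℕ) : ZMod (12 * k)) * σ) = 1 := by
  have hk := NeZero.pos k
  rw [map_mul, ZMod.sign_addLeft_natCast ⟨6 * k, by ring⟩,
    h.sign_eq (by rw [ZMod.card]; omega), ZMod.card, Odd.neg_one_pow ⟨3 * k - 2, by omega⟩,
    Even.neg_one_pow ⟨6 * k, by ring⟩]
  decide

theorem not_isHamiltonianCircuit_of_sum_weights_eq {A : Set (ZMod (12 * k))}
    (h : σ.IsHamiltonianCircuit A) (hs : ∀ v, σ v - v = M + s v)
    (hs3 : ∀ v, s v = 0 ∨ s v = 2 ∨ s v = 3) (hsum : ∑ v, s v = 2 * (12 * k)) : False := by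
  have hk := NeZero.pos k
  set π : Perm (ZMod (12 * k)) := Equiv.addLeft ((6 * k - 3 : ℕ) : ZMod (12 * k)) * σ
  set w : ZMod (12 * k) → ℤ := fun v => s v - 3
  have hw (v : ZMod (12 * k)) : (w v : ZMod (12 * k)) = π v - v := by
    have h3 : ((6 * k - 3 : ℕ) : ZMod (12 * k)) + 3 = M := by
      exact_mod_cast congrArg Nat.cast (Nat.sub_add_cancel (by omega : 3 ≤ 6 * k))
    simp only [π, w, Perm.mul_apply, coe_addLeft]
    push_cast
    linear_combination -(hs v) - h3 -
      ZMod.natCast_add_self_of_two_mul_eq (n := 12 * k) (m := 6 * k) (by ring)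
  have hw_abs (v : ZMod (12 * k)) : |w v| < (12 * k : ℕ) := by
    rw [abs_lt]; rcases hs3 v with h' | h' | h' <;> simp only [w, h'] <;> omega
  have hw_nonpos (v : ZMod (12 * k)) : w v ≤ 0 := by
    rcases hs3 v with h' | h' | h' <;> simp only [w, h'] <;> omega
  have hw_sum : ∑ v, w v = -(12 * k : ℕ) := by
    simp only [w, sum_sub_distrib, ← Nat.cast_sum, hsum, sum_const, card_univ, ZMod.card]
    push_cast; ring
  have hsupp : π.support = ({v | s v ≠ 3} : Finset _) := by
    ext v
    rw [Perm.mem_support, Ne, Perm.apply_eq_self_iff_displacement_eq_zero hw (hw_abs v)]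
    simp [w]
    omega
  have heven : Even #{v | s v = 3} := by
    have := (even_sum_iff_even_card_odd (s := univ) s).1 (hsum ▸ even_two_mul _)
    convert this using 3 with v
    rcases hs3 v with h' | h' | h' <;> simp [h', Nat.odd_iff]
  have hsupp_even : Even #π.support := by
    have hcount := card_filter_add_card_filter_not (s := univ) (fun v => s v = 3)
    rw [card_univ, ZMod.card] at hcount
    have h12 : Even (12 * k) := ⟨6 * k, by ring⟩
    rw [← hcount, Nat.even_add] at h12
    rw [hsupp]
    exact h12.1 heven
  have hsignπ : Perm.sign π = -1 := by
    rw [(Perm.isCycle_of_sum_displacement_eq_neg hw hw_abs hw_nonpos hw_sum).sign,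
      hsupp_even.neg_one_pow]
  exact absurd (hsignπ.symm.trans (sign_addLeft_mul_eq_one h)) (by decide)

theorem not_isHamiltonianCircuit_six_mul : ¬ σ.IsHamiltonianCircuit {M, M + 2, M + 3} := by
  intro h
  have hk := NeZero.pos k
  choose s hs3 hs using fun v => show ∃ t : ℕ, (t = 0 ∨ t = 2 ∨ t = 3) ∧ σ v - v = M + t by
    obtain hv | hv | hv : σ v - v = M ∨ σ v - v = M + 2 ∨ σ v - v = M + 3 := h.1 v
    exacts [⟨0, by simp only [hv, Nat.cast_zero, add_zero, true_or, and_self]⟩,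
      ⟨2, by simp only [hv, Nat.cast_ofNat, true_or, or_true, and_self]⟩,
      ⟨3, by simp only [hv, Nat.cast_ofNat, or_true, and_self]⟩]
  have hpair := two_le_weight_add_weight_apply h hs hs3
  have hpair_sum : ∑ v, (s v + s (σ v)) = 2 * ∑ v, s v := by
    rw [sum_add_distrib, Equiv.sum_comp σ s, two_mul]
  have hle : ∑ v, s v ≤ ∑ _v : ZMod (12 * k), 3 := sum_le_sum fun v _ => by have := hs3 v; omega
  have hge : ∑ _v : ZMod (12 * k), 2 ≤ ∑ v, (s v + s (σ v)) := sum_le_sum fun v _ => hpair v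
  simp only [sum_const, card_univ, ZMod.card, smul_eq_mul] at hle hge
  obtain ⟨c, hc⟩ := dvd_sum_weights hs
  have hc1 : 1 ≤ c := by nlinarith
  have hc3 : c ≤ 3 := by nlinarith
  interval_cases c
  · have hpair2 := (sum_eq_sum_iff_of_le (s := univ) (f := fun _ => 2)
      (g := fun v => s v + s (σ v)) fun v _ => hpair v).1
      (by simp only [sum_const, card_univ, ZMod.card, smul_eq_mul]; omega)
    refine not_isHamiltonianCircuit_even_steps (h.mono fun v => ?_)
    obtain h' | h' : s v = 0 ∨ s v = 2 := by have := hpair2 v (mem_univ v); have := hs3 v; omega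
    · simp [hs v, h']
    · simp [hs v, h']
  · exact not_isHamiltonianCircuit_of_sum_weights_eq h hs hs3 (by rw [hc]; ring)
  · have hall := (sum_eq_sum_iff_of_le (s := univ) (g := fun _ => 3)
      fun v _ => (by have := hs3 v; omega : s v ≤ 3)).1
      (by simp only [sum_const, card_univ, ZMod.card, smul_eq_mul]; omega)
    refine not_isHamiltonianCircuit_six_mul_add_three (h.mono fun v => ?_)
    simp [hs v, hall v (mem_univ v)]

end SixMul

/-- If `gcd(a − b, 12k) = 1` and either `2a − 3b ≡ 6k (mod 12k)` or
`3a − 2b ≡ 6k (mod 12k)`, then `Cay(ℤ₁₂ₖ; 6k, a, b)` has no hamiltonian circuit. -/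
theorem no_ham_circuit_general (k : ℕ) (hk : 1 ≤ k) (a b : ZMod (12 * k))
    (hgcd : Nat.gcd (a - b).val (12 * k) = 1)
    (hcong : 2 * a - 3 * b = ((6 * k : ℕ) : ZMod (12 * k)) ∨
             3 * a - 2 * b = ((6 * k : ℕ) : ZMod (12 * k))) :
    ¬ ∃ σ : Equiv.Perm (ZMod (12 * k)),
      (∀ v : ZMod (12 * k), σ v - v ∈
        ({((6 * k : ℕ) : ZMod (12 * k)), a, b} : Set (ZMod (12 * k)))) ∧
      (∀ v w : ZMod (12 * k), ∃ i : ℕ, (σ ^ i) v = w) := by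
  rintro ⟨σ, hσ⟩
  have : NeZero k := ⟨by omega⟩
  have hab : IsUnit (a - b) := by
    simpa using (ZMod.unitOfCoprime _ hgcd).isUnit
  obtain ⟨x, hx⟩ := exists_unit_mul_mem_six_mul hab hcong
  exact not_isHamiltonianCircuit_six_mul
    (Perm.IsHamiltonianCircuit.permCongr hσ (DistribMulAction.toAddEquiv _ x) hx)
end

section
/- Suppose a is divisible by 6, and H is a hamiltonian circuit of Cay(ℤ₂ₐ; a, a+2, a+3) (toward contradiction). If r is the number of vertices traveling by a, s the number traveling by a+2, and t the number traveling by a+3, then r+s+t = 2a, t ≡ 2r (mod 2a), and s ≡ −3r (mod 2a). -/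
/-- Suppose `6 ∣ a` (with `a > 0`) and `σ` is a hamiltonian circuit of
`Cay(ℤ₂ₐ; a, a+2, a+3)`. If `r`, `s`, `t` are the numbers of vertices travelling by
`a`, `a+2`, `a+3` respectively, then `r + s + t = 2a`, `t ≡ 2r (mod 2a)` and
`s ≡ −3r (mod 2a)`. -/
theorem ham_circuit_travel_counts (a : ℕ) (ha : 0 < a) (h6 : 6 ∣ a)
    (σ : Equiv.Perm (ZMod (2 * a)))
    (harc : ∀ v : ZMod (2 * a), σ v - v ∈
      ({((a : ℕ) : ZMod (2 * a)), ((a + 2 : ℕ) : ZMod (2 * a)),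
        ((a + 3 : ℕ) : ZMod (2 * a))} : Set (ZMod (2 * a))))
    (hcyc : ∀ v w : ZMod (2 * a), ∃ i : ℕ, (σ ^ i) v = w)
    (r s t : ℕ)
    (hr : r = Nat.card {v : ZMod (2 * a) // σ v - v = ((a : ℕ) : ZMod (2 * a))})
    (hs : s = Nat.card {v : ZMod (2 * a) // σ v - v = ((a + 2 : ℕ) : ZMod (2 * a))})
    (ht : t = Nat.card {v : ZMod (2 * a) // σ v - v = ((a + 3 : ℕ) : ZMod (2 * a))}) :
    r + s + t = 2 * a ∧ t ≡ 2 * r [MOD 2 * a] ∧ s + 3 * r ≡ 0 [MOD 2 * a] := by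
  classical
  haveI : NeZero (2 * a) := ⟨by omega⟩
  have ha6 : 6 ≤ a := Nat.le_of_dvd ha h6
  set x1 : ZMod (2 * a) := ((a : ℕ) : ZMod (2 * a)) with hx1
  set x2 : ZMod (2 * a) := ((a + 2 : ℕ) : ZMod (2 * a)) with hx2
  set x3 : ZMod (2 * a) := ((a + 3 : ℕ) : ZMod (2 * a)) with hx3
  have hdist : ∀ m k : ℕ, m < k → k ≤ a + 3 → a ≤ m →
      ((m : ℕ) : ZMod (2 * a)) ≠ ((k : ℕ) : ZMod (2 * a)) := by
    intro m k hmk hk hm h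
    have h1 := (ZMod.natCast_eq_natCast_iff _ _ _).mp h
    have h2 := (Nat.modEq_iff_dvd' (by omega)).mp h1
    have h3 := Nat.le_of_dvd (by omega) h2
    omega
  have hd12 : x1 ≠ x2 := hdist a (a + 2) (by omega) (by omega) (by omega)
  have hd13 : x1 ≠ x3 := hdist a (a + 3) (by omega) (by omega) (by omega)
  have hd23 : x2 ≠ x3 := hdist (a + 2) (a + 3) (by omega) (by omega) (by omega)
  set F1 : Finset (ZMod (2 * a)) := Finset.univ.filter (fun v => σ v - v = x1) with hF1
  set F2 : Finset (ZMod (2 * a)) := Finset.univ.filter (fun v => σ v - v = x2) with hF2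
  set F3 : Finset (ZMod (2 * a)) := Finset.univ.filter (fun v => σ v - v = x3) with hF3
  have hrc : r = F1.card := by
    rw [hr, Nat.card_eq_fintype_card, Fintype.card_subtype]
  have hsc : s = F2.card := by
    rw [hs, Nat.card_eq_fintype_card, Fintype.card_subtype]
  have htc : t = F3.card := by
    rw [ht, Nat.card_eq_fintype_card, Fintype.card_subtype]
  have hdisj12 : Disjoint F1 F2 := by
    rw [Finset.disjoint_left]
    intro v h1 h2
    rw [hF1, Finset.mem_filter] at h1
    rw [hF2, Finset.mem_filter] at h2
    exact hd12 (by rw [← h1.2, h2.2])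
  have hdisj123 : Disjoint (F1 ∪ F2) F3 := by
    rw [Finset.disjoint_left]
    intro v h1 h2
    rw [hF3, Finset.mem_filter] at h2
    rcases Finset.mem_union.mp h1 with h1 | h1
    · rw [hF1, Finset.mem_filter] at h1
      exact hd13 (by rw [← h1.2, h2.2])
    · rw [hF2, Finset.mem_filter] at h1
      exact hd23 (by rw [← h1.2, h2.2])
  have hcover : F1 ∪ F2 ∪ F3 = Finset.univ := by
    ext v
    simp only [hF1, hF2, hF3, Finset.mem_union, Finset.mem_filter, Finset.mem_univ,
      true_and, iff_true]
    have h := harc v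
    simp only [Set.mem_insert_iff, Set.mem_singleton_iff] at h
    tauto
  have hcard : r + s + t = 2 * a := by
    rw [hrc, hsc, htc, ← Finset.card_union_of_disjoint hdisj12,
      ← Finset.card_union_of_disjoint hdisj123, hcover, Finset.card_univ, ZMod.card]
  refine ⟨hcard, ?_⟩
  -- sum of displacements is zero
  have hzero : ∑ v : ZMod (2 * a), (σ v - v) = 0 := by
    rw [Finset.sum_sub_distrib]
    have : ∑ v : ZMod (2 * a), σ v = ∑ v : ZMod (2 * a), v :=
      Equiv.sum_comp σ (fun x => x)
    rw [this, sub_self]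
  have hsum3 : ∑ v : ZMod (2 * a), (σ v - v)
      = F1.card • x1 + F2.card • x2 + F3.card • x3 := by
    rw [← hcover, Finset.sum_union hdisj123, Finset.sum_union hdisj12]
    congr 1
    · congr 1
      · rw [Finset.sum_congr rfl (fun v hv => (Finset.mem_filter.mp hv).2),
          Finset.sum_const]
      · rw [Finset.sum_congr rfl (fun v hv => (Finset.mem_filter.mp hv).2),
          Finset.sum_const]
    · rw [Finset.sum_congr rfl (fun v hv => (Finset.mem_filter.mp hv).2),
        Finset.sum_const]
  have E1 : (r : ZMod (2 * a)) * (a : ℕ) + (s : ZMod (2 * a)) * ((a : ZMod (2*a)) + 2)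
      + (t : ZMod (2 * a)) * ((a : ZMod (2*a)) + 3) = 0 := by
    have h := hsum3.symm.trans hzero
    rw [← hrc, ← hsc, ← htc] at h
    rw [hx1, hx2, hx3] at h
    push_cast at h
    linear_combination h
  have E2 : (r : ZMod (2 * a)) + s + t = 0 := by
    have h : ((r + s + t : ℕ) : ZMod (2 * a)) = ((2 * a : ℕ) : ZMod (2 * a)) := by
      rw [hcard]
    rw [ZMod.natCast_self] at h
    push_cast at h
    linear_combination h
  have Ht : (t : ZMod (2 * a)) = ((2 * r : ℕ) : ZMod (2 * a)) := by
    push_cast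
    linear_combination E1 + (-(a : ZMod (2 * a)) - 2) * E2
  constructor
  · exact (ZMod.natCast_eq_natCast_iff _ _ _).mp Ht
  · have Hs : ((s + 3 * r : ℕ) : ZMod (2 * a)) = ((0 : ℕ) : ZMod (2 * a)) := by
      push_cast
      push_cast at Ht
      linear_combination E2 - Ht
    exact (ZMod.natCast_eq_natCast_iff _ _ _).mp Hs
end

section
/- Let k ≥ 1 and let d = 2k / gcd(a, 2k) be the order of a in ℤ₂ₖ. If d is odd, then a is even and k ∉ ⟨a⟩, and moreover every v ∈ ℤ₂ₖ with ⟨a,b,k⟩ = ℤ₂ₖ can be uniquely written as v = x·a + y·b + z·k with 0 ≤ x < d, 0 ≤ y < k/d, 0 ≤ z < 2. -/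
lemma bezout_of_closure (n : ℕ) (A B K : ZMod n)
    (hgen : AddSubgroup.closure ({A, B, K} : Set (ZMod n)) = ⊤) :
    ∃ u v w : ℤ, u • A + v • B + w • K = 1 := by
  have h1 : (1 : ZMod n) ∈ AddSubgroup.closure ({A, B, K} : Set (ZMod n)) := by
    rw [hgen]; trivial
  rw [show ({A, B, K} : Set (ZMod n)) = {A} ∪ ({B} ∪ {K}) by rfl,
    AddSubgroup.closure_union, AddSubgroup.closure_union,
    ← AddSubgroup.zmultiples_eq_closure, ← AddSubgroup.zmultiples_eq_closure,
    ← AddSubgroup.zmultiples_eq_closure] at h1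
  rw [AddSubgroup.mem_sup] at h1
  obtain ⟨x, hx, y, hy, hxy⟩ := h1
  rw [AddSubgroup.mem_sup] at hy
  obtain ⟨y1, hy1, y2, hy2, hyy⟩ := hy
  rw [AddSubgroup.mem_zmultiples_iff] at hx hy1 hy2
  obtain ⟨u, rfl⟩ := hx
  obtain ⟨v, rfl⟩ := hy1
  obtain ⟨w, rfl⟩ := hy2
  exact ⟨u, v, w, by rw [← hyy, ← add_assoc] at hxy; exact hxy⟩

lemma int_zero_of_dvd_of_abs_lt {c m : ℤ} (h1 : c ∣ m) (h2 : |m| < c) : m = 0 := by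
  by_contra h
  have h3 : c ∣ |m| := (dvd_abs c m).mpr h1
  have := Int.le_of_dvd (abs_pos.mpr h) h3
  omega

example (n : ℕ) (h : Odd n) : Nat.Coprime 2 n := by
  exact h.coprime_two_left

lemma core_inj (k a b : ℕ) (hk : 1 ≤ k)
    (hcop : Nat.Coprime b (Nat.gcd a (2*k) / 2))
    (hd : Odd ((2*k) / Nat.gcd a (2*k)))
    (x1 y1 z1 x2 y2 z2 : ℕ)
    (hx1 : x1 < (2*k) / Nat.gcd a (2*k)) (hx2 : x2 < (2*k) / Nat.gcd a (2*k))
    (hy1 : y1 < k / ((2*k) / Nat.gcd a (2*k))) (hy2 : y2 < k / ((2*k) / Nat.gcd a (2*k)))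
    (hz1 : z1 < 2) (hz2 : z2 < 2)
    (hdvd : (2*(k:ℤ)) ∣ ((x1*a + y1*b + z1*k : ℤ) - (x2*a + y2*b + z2*k))) :
    x1 = x2 ∧ y1 = y2 ∧ z1 = z2 := by
  set g := Nat.gcd a (2*k) with hgdef
  set d := (2*k) / g with hddef
  have hga : g ∣ a := Nat.gcd_dvd_left _ _
  have hg2k : g ∣ 2*k := Nat.gcd_dvd_right _ _
  have hgpos : 0 < g := Nat.gcd_pos_of_pos_right _ (by omega)
  have hdg : d * g = 2*k := Nat.div_mul_cancel hg2k
  have hdpos : 0 < d := by rcases hd with ⟨t, ht⟩; omega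
  have hcop2d : Nat.Coprime 2 d := hd.coprime_two_left
  have hg2 : 2 ∣ g := hcop2d.dvd_of_dvd_mul_left ⟨k, hdg⟩
  set h := g / 2 with hhdef
  have hgh : g = 2 * h := by omega
  have hkeq : k = d * h := by
    have h1 : 2*k = 2*(d*h) := by rw [← hdg, hgh]; ring
    omega
  have hm : k / d = h := by rw [hkeq, Nat.mul_div_cancel_left _ hdpos]
  rw [hm] at hy1 hy2
  have hhpos : 0 < h := by omega
  set X : ℤ := (x1:ℤ) - x2 with hX
  set Y : ℤ := (y1:ℤ) - y2 with hY
  set Z : ℤ := (z1:ℤ) - z2 with hZ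
  have hdvd' : (2*(k:ℤ)) ∣ X*a + Y*b + Z*k := by convert hdvd using 1; ring
  have hha : (h:ℤ) ∣ a := Int.natCast_dvd_natCast.mpr (dvd_trans ⟨2, by omega⟩ hga)
  have hhk : (h:ℤ) ∣ k := Int.natCast_dvd_natCast.mpr ⟨d, by rw [hkeq, mul_comm]⟩
  have hh2k : (h:ℤ) ∣ 2*(k:ℤ) := Dvd.dvd.mul_left hhk 2
  have hhYb : (h:ℤ) ∣ Y*b := by
    have h1 : (h:ℤ) ∣ X*a + Y*b + Z*k := hh2k.trans hdvd'
    have h2 : (h:ℤ) ∣ X*a := Dvd.dvd.mul_left hha X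
    have h3 : (h:ℤ) ∣ Z*k := Dvd.dvd.mul_left hhk Z
    have e : Y*b = (X*a + Y*b + Z*k) - X*a - Z*k := by ring
    rw [e]; exact dvd_sub (dvd_sub h1 h2) h3
  have hcopZ : IsCoprime ((h:ℤ)) ((b:ℤ)) := Nat.isCoprime_iff_coprime.mpr hcop.symm
  have hhY : (h:ℤ) ∣ Y := hcopZ.dvd_of_dvd_mul_right hhYb
  have hYzero : Y = 0 := by
    refine int_zero_of_dvd_of_abs_lt hhY ?_
    have e1 : (y1:ℤ) < h := by exact_mod_cast hy1
    have e2 : (y2:ℤ) < h := by exact_mod_cast hy2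
    rw [abs_lt]; omega
  have hdvd2 : (2*(k:ℤ)) ∣ X*a + Z*k := by
    have e : X*a + Z*k = (X*a + Y*b + Z*k) - Y*b := by ring
    rw [e]; exact dvd_sub hdvd' (by rw [hYzero]; simp)
  have hg2k' : (g:ℤ) ∣ 2*(k:ℤ) := by exact_mod_cast Int.natCast_dvd_natCast.mpr hg2k
  have hgZk : (g:ℤ) ∣ Z*k := by
    have h1 : (g:ℤ) ∣ X*a + Z*k := hg2k'.trans hdvd2
    have h2 : (g:ℤ) ∣ X*a := Dvd.dvd.mul_left (Int.natCast_dvd_natCast.mpr hga) X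
    have e : Z*k = (X*a + Z*k) - X*a := by ring
    rw [e]; exact dvd_sub h1 h2
  have h2Zd : (2:ℤ) ∣ Z*d := by
    have e1 : ((g:ℕ):ℤ) = 2*(h:ℤ) := by exact_mod_cast hgh
    have e2 : ((k:ℕ):ℤ) = (d:ℤ)*(h:ℤ) := by exact_mod_cast hkeq
    have hdvdh : (2*(h:ℤ)) ∣ (Z*(d:ℤ))*(h:ℤ) := by
      rw [show (Z*(d:ℤ))*(h:ℤ) = Z*((d:ℤ)*(h:ℤ)) by ring, ← e2, ← e1]; exact hgZk
    exact (mul_dvd_mul_iff_right (by positivity : ((h:ℤ)) ≠ 0)).mp hdvdh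
  have h2Z : (2:ℤ) ∣ Z := by
    have hc : IsCoprime (2:ℤ) ((d:ℤ)) := by exact_mod_cast Nat.isCoprime_iff_coprime.mpr hcop2d
    exact hc.dvd_of_dvd_mul_right h2Zd
  have hZzero : Z = 0 := by omega
  have hdvd3 : (2*(k:ℤ)) ∣ X*a := by
    have e : X*a = (X*a + Z*k) - Z*k := by ring
    rw [e]; exact dvd_sub hdvd2 (by rw [hZzero]; simp)
  have hcopad : Nat.Coprime (a/g) d := Nat.coprime_div_gcd_div_gcd hgpos
  have hdX : (d:ℤ) ∣ X := by
    have ha' : (a:ℤ) = ((a/g : ℕ):ℤ) * g := by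
      rw [← Nat.cast_mul, Nat.div_mul_cancel hga]
    have e3 : ((d:ℤ))*(g:ℤ) = 2*(k:ℤ) := by exact_mod_cast hdg
    have h1 : ((d:ℤ)*g) ∣ (X*((a/g:ℕ):ℤ))*g := by
      rw [e3, show (X*((a/g:ℕ):ℤ))*(g:ℤ) = X*(((a/g:ℕ):ℤ)*g) by ring, ← ha']
      exact hdvd3
    have h2 : (d:ℤ) ∣ X*((a/g:ℕ):ℤ) :=
      (mul_dvd_mul_iff_right (by positivity : ((g:ℤ)) ≠ 0)).mp h1
    exact (Nat.isCoprime_iff_coprime.mpr hcopad.symm).dvd_of_dvd_mul_right h2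
  have hXzero : X = 0 := by
    refine int_zero_of_dvd_of_abs_lt hdX ?_
    have e1 : (x1:ℤ) < d := by exact_mod_cast hx1
    have e2 : (x2:ℤ) < d := by exact_mod_cast hx2
    rw [abs_lt]; omega
  refine ⟨by omega, by omega, by omega⟩


/-- Let `k ≥ 1` and `d = 2k / gcd(a, 2k)` be the order of `a` in `ℤ₂ₖ`.
If `d` is odd and `⟨a, b, k⟩ = ℤ₂ₖ`, then `a` is even, `k ∉ ⟨a⟩`, and every
`v ∈ ℤ₂ₖ` can be uniquely written as `v = x·a + y·b + z·k` with
`0 ≤ x < d`, `0 ≤ y < k/d`, `0 ≤ z < 2`. -/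
theorem unique_rep_odd_order (k a b : ℕ) (hk : 1 ≤ k)
    (hgen : AddSubgroup.closure
      ({((a : ℕ) : ZMod (2 * k)), ((b : ℕ) : ZMod (2 * k)), ((k : ℕ) : ZMod (2 * k))} :
        Set (ZMod (2 * k))) = ⊤)
    (hd : Odd ((2 * k) / Nat.gcd a (2 * k))) :
    Even a ∧
    ((k : ZMod (2 * k)) ∉ AddSubgroup.zmultiples ((a : ℕ) : ZMod (2 * k))) ∧
    (∀ v : ZMod (2 * k), ∃! p : ℕ × ℕ × ℕ,
      p.1 < (2 * k) / Nat.gcd a (2 * k) ∧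
      p.2.1 < k / ((2 * k) / Nat.gcd a (2 * k)) ∧
      p.2.2 < 2 ∧
      v = ((p.1 * a + p.2.1 * b + p.2.2 * k : ℕ) : ZMod (2 * k))) := by
  haveI : NeZero (2*k) := ⟨by omega⟩
  set g := Nat.gcd a (2*k) with hgdef
  set d := (2*k) / g with hddef
  have hga : g ∣ a := Nat.gcd_dvd_left _ _
  have hg2k : g ∣ 2*k := Nat.gcd_dvd_right _ _
  have hgpos : 0 < g := Nat.gcd_pos_of_pos_right _ (by omega)
  have hdg : d * g = 2*k := Nat.div_mul_cancel hg2k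
  have hdpos : 0 < d := by rcases hd with ⟨t, ht⟩; omega
  have hcop2d : Nat.Coprime 2 d := hd.coprime_two_left
  have hg2 : 2 ∣ g := hcop2d.dvd_of_dvd_mul_left ⟨k, hdg⟩
  set h := g / 2 with hhdef
  have hgh : g = 2 * h := by omega
  have hkeq : k = d * h := by
    have h1 : 2*k = 2*(d*h) := by rw [← hdg, hgh]; ring
    omega
  have hm : k / d = h := by rw [hkeq, Nat.mul_div_cancel_left _ hdpos]
  have hhpos : 0 < h := by omega
  have hha : h ∣ a := dvd_trans ⟨2, by omega⟩ hga
  have hhk : h ∣ k := ⟨d, by rw [hkeq, mul_comm]⟩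
  -- Bezout
  obtain ⟨u, v, w, huvw⟩ := bezout_of_closure (2*k) _ _ _ hgen
  have hbez : ((2*k : ℕ):ℤ) ∣ (u*a + v*b + w*k) - 1 := by
    have e1 : (((u*a + v*b + w*k : ℤ)) : ZMod (2*k)) = ((1:ℤ) : ZMod (2*k)) := by
      push_cast
      rw [← huvw]
      simp [zsmul_eq_mul]
    have e2 := (ZMod.intCast_eq_intCast_iff _ _ _).mp e1
    exact Int.ModEq.dvd e2.symm
  -- coprime b h
  have hcop : Nat.Coprime b h := by
    set e := Nat.gcd b h with hedef
    have heb : (e:ℤ) ∣ b := Int.natCast_dvd_natCast.mpr (Nat.gcd_dvd_left _ _)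
    have heh : e ∣ h := Nat.gcd_dvd_right _ _
    have hea : (e:ℤ) ∣ a := Int.natCast_dvd_natCast.mpr (heh.trans hha)
    have hek : (e:ℤ) ∣ k := Int.natCast_dvd_natCast.mpr (heh.trans hhk)
    have he2k : (e:ℤ) ∣ ((2*k:ℕ):ℤ) := by push_cast; exact Dvd.dvd.mul_left hek 2
    have heS : (e:ℤ) ∣ (u*a + v*b + w*k) := by
      exact dvd_add (dvd_add (Dvd.dvd.mul_left hea u) (Dvd.dvd.mul_left heb v)) (Dvd.dvd.mul_left hek w)
    have he1 : (e:ℤ) ∣ 1 := by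
      have := dvd_sub heS (he2k.trans hbez)
      simpa using this
    have : e ∣ 1 := by exact_mod_cast he1
    exact Nat.dvd_one.mp this
  refine ⟨?_, ?_, ?_⟩
  · obtain ⟨c, hc⟩ := hg2.trans hga
    exact ⟨c, by omega⟩
  · intro hmem
    rw [AddSubgroup.mem_zmultiples_iff] at hmem
    obtain ⟨z, hz⟩ := hmem
    have e1 : (((z*a : ℤ)) : ZMod (2*k)) = (((k:ℕ):ℤ) : ZMod (2*k)) := by
      push_cast
      rw [← hz]
      simp [zsmul_eq_mul]
    have e2 : ((2*k:ℕ):ℤ) ∣ (z*a) - k := by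
      have := (ZMod.intCast_eq_intCast_iff _ _ _).mp e1
      exact Int.ModEq.dvd this.symm
    have hgk : (g:ℤ) ∣ (k:ℤ) := by
      have h1 : (g:ℤ) ∣ (z*a) - k := (Int.natCast_dvd_natCast.mpr hg2k).trans e2
      have h2 : (g:ℤ) ∣ z*a := Dvd.dvd.mul_left (Int.natCast_dvd_natCast.mpr hga) z
      have e : (k:ℤ) = z*a - ((z*a) - k) := by ring
      rw [e]; exact dvd_sub h2 h1
    have hgk' : g ∣ k := Int.natCast_dvd_natCast.mp hgk
    have : (2*h) ∣ (d*h) := by rw [← hgh, ← hkeq]; exact hgk'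
    have h2d : 2 ∣ d := (Nat.mul_dvd_mul_iff_right hhpos).mp this
    rcases hd with ⟨t, ht⟩; omega
  · -- uniqueness part
    set m := k / d with hmdef
    set f : Fin d × Fin m × Fin 2 → ZMod (2*k) :=
      fun p => ((p.1.1*a + p.2.1.1*b + p.2.2.1*k : ℕ) : ZMod (2*k)) with hfdef
    have hinj : Function.Injective f := by
      rintro p q hpq
      have hdvd : (2*(k:ℤ)) ∣ (((p.1.1:ℤ)*a + p.2.1.1*b + p.2.2.1*k) - ((q.1.1:ℤ)*a + q.2.1.1*b + q.2.2.1*k)) := by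
        have e1 : (((p.1.1*a + p.2.1.1*b + p.2.2.1*k : ℕ):ℤ) : ZMod (2*k))
            = (((q.1.1*a + q.2.1.1*b + q.2.2.1*k : ℕ):ℤ) : ZMod (2*k)) := by
          push_cast
          have := hpq
          simp only [hfdef] at this
          push_cast at this
          exact this
        have e2 := (ZMod.intCast_eq_intCast_iff _ _ _).mp e1
        have e3 := Int.ModEq.dvd e2
        rw [dvd_sub_comm] at e3
        push_cast at e3 ⊢
        convert e3 using 2
      obtain ⟨h1, h2, h3⟩ := core_inj k a b hk hcop hd p.1.1 p.2.1.1 p.2.2.1 q.1.1 q.2.1.1 q.2.2.1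
        p.1.2 q.1.2 p.2.1.2 q.2.1.2 p.2.2.2 q.2.2.2 hdvd
      obtain ⟨⟨p1,hp1⟩,⟨p2,hp2⟩,⟨p3,hp3⟩⟩ := p
      obtain ⟨⟨q1,hq1⟩,⟨q2,hq2⟩,⟨q3,hq3⟩⟩ := q
      simp only at h1 h2 h3
      subst h1; subst h2; subst h3; rfl
    have hcard : Fintype.card (Fin d × Fin m × Fin 2) = Fintype.card (ZMod (2*k)) := by
      rw [Fintype.card_prod, Fintype.card_prod, Fintype.card_fin, Fintype.card_fin,
        Fintype.card_fin, ZMod.card, hm, hkeq]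
      ring
    have hbij : Function.Bijective f := (Fintype.bijective_iff_injective_and_card f).mpr ⟨hinj, hcard⟩
    intro v
    obtain ⟨p, hp⟩ := hbij.surjective v
    obtain ⟨⟨p1,hp1⟩,⟨p2,hp2⟩,⟨p3,hp3⟩⟩ := p
    refine ⟨(p1, p2, p3), ⟨hp1, hp2, hp3, hp.symm⟩, ?_⟩
    rintro ⟨x, y, z⟩ ⟨h1, h2, h3, h4⟩
    have heq : f (⟨x,h1⟩, ⟨y,h2⟩, ⟨z,h3⟩) = f (⟨p1,hp1⟩, ⟨p2,hp2⟩, ⟨p3,hp3⟩) :=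
      h4.symm.trans hp.symm
    have := hinj heq
    simpa [Prod.ext_iff, Fin.ext_iff] using this
end

section
/- Suppose Cay(ℤ₂ₖ; a, b, b+k) has a hamiltonian circuit, gcd(a−b, k) = 1, gcd(a, 2k) ≠ 1, and gcd(b, k) ≠ 1. Then in the hamiltonian circuit, exactly k vertices travel by a and k vertices travel by b or b+k. -/
/-!
Let `r` vertices travel by `a`. Project the circuit to `ℤₖ`, where the steps `b` and `b + k`
coincide. The steps of a permutation sum to `0`, so `r • a + (2k - r) • b = 0` in `ℤₖ`, i.e.
`r (a - b) = 0`; as `a - b` is a unit there, `k ∣ r`. If `r = 2k`, the circuit from `0` only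
visits multiples of `a`, so reaching `1` makes `a` a unit mod `2k`; if `r = 0`, it only visits
multiples of `b` mod `k`, so `b` is a unit mod `k`. Both are excluded, hence `r = k`.
-/

open Finset

lemma ZMod.isUnit_intCast_iff_gcd_eq_one (x : ℤ) (n : ℕ) :
    IsUnit (x : ZMod n) ↔ Int.gcd x n = 1 := by
  rw [ZMod.coe_int_isUnit_iff_isCoprime, isCoprime_comm, Int.isCoprime_iff_gcd_eq_one]

lemma Nat.card_subtype_not {α : Type*} [Finite α] (p : α → Prop) :
    Nat.card {x // ¬ p x} = Nat.card α - Nat.card {x // p x} := by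
  have := Fintype.ofFinite α
  classical
  simp only [Nat.card_eq_fintype_card, Fintype.card_subtype_compl]

lemma Equiv.Perm.sum_comp_sub_eq_zero {α M : Type*} [Fintype α] [AddCommGroup M]
    (σ : Equiv.Perm α) (f : α → M) : ∑ v, (f (σ v) - f v) = 0 := by
  rw [sum_sub_distrib, Equiv.sum_comp σ f, sub_self]

lemma isUnit_of_map_apply_eq_add {S R : Type*} [Semiring S] [CommSemiring R] (f : S →+* R)
    (σ : Equiv.Perm S) (c : R) (hstep : ∀ v, f (σ v) = f v + c)
    (hcyc : ∃ i : ℕ, (σ ^ i) 0 = 1) : IsUnit c := by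
  have horbit : ∀ i : ℕ, f ((σ ^ i) 0) = i * c := by
    intro i
    induction i with
    | zero => simp
    | succ i ih => rw [pow_succ', Equiv.Perm.mul_apply, hstep, ih]; push_cast; ring
  obtain ⟨i, hi⟩ := hcyc
  exact IsUnit.of_mul_eq_one (i : R) (by rw [mul_comm, ← horbit, hi, map_one])

section Circuit

variable {k : ℕ} {a b : ℤ} {σ : Equiv.Perm (ZMod (2 * k))}

abbrev halfCast (k : ℕ) : ZMod (2 * k) →+* ZMod k :=
  ZMod.castHom (dvd_mul_left k 2) (ZMod k)

variable (harc : ∀ v : ZMod (2 * k), σ v - v ∈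
  ({(a : ZMod (2 * k)), (b : ZMod (2 * k)),
    (b : ZMod (2 * k)) + ((k : ℕ) : ZMod (2 * k))} : Set (ZMod (2 * k))))
include harc

lemma halfCast_apply_eq_add_of_ne {v : ZMod (2 * k)} (hv : σ v - v ≠ a) :
    halfCast k (σ v) = halfCast k v + b := by
  rw [← sub_eq_iff_eq_add', ← map_sub]
  obtain h | h | h : σ v - v = a ∨ σ v - v = b ∨ σ v - v = b + ((k : ℕ) : ZMod (2 * k)) :=
    harc v
  · exact absurd h hv
  · rw [h, map_intCast]
  · rw [h, map_add, map_intCast, map_natCast, ZMod.natCast_self, add_zero]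

lemma sub_ne_iff_of_halfCast_ne (hab : (a : ZMod k) ≠ b) (v : ZMod (2 * k)) :
    σ v - v ≠ a ↔ σ v - v = b ∨ σ v - v = b + ((k : ℕ) : ZMod (2 * k)) := by
  refine ⟨fun hv => by simpa [hv] using harc v, ?_⟩
  rintro (h | h) ha <;> rw [ha] at h <;> apply hab <;> simpa using congr_arg (halfCast k) h

lemma natCast_card_mul_sub_eq_zero [NeZero k] :
    (Nat.card {v // σ v - v = a} : ZMod k) * ((a - b : ℤ) : ZMod k) = 0 := by
  classical
  have hstep : ∀ v, halfCast k (σ v) - halfCast k v - b =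
      if σ v - v = a then ((a - b : ℤ) : ZMod k) else 0 := by
    intro v
    split_ifs with hv
    · rw [← map_sub, hv, map_intCast, Int.cast_sub]
    · rw [halfCast_apply_eq_add_of_ne harc hv, add_sub_cancel_left, sub_self]
  calc (Nat.card {v // σ v - v = a} : ZMod k) * ((a - b : ℤ) : ZMod k)
      = ∑ v, if σ v - v = a then ((a - b : ℤ) : ZMod k) else 0 := by
        rw [sum_ite, sum_const_zero, add_zero, sum_const, nsmul_eq_mul,
          Nat.card_eq_fintype_card, Fintype.card_subtype]
    _ = ∑ v, (halfCast k (σ v) - halfCast k v) - (2 * k : ℕ) • (b : ZMod k) := by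
        simp only [← hstep, sum_sub_distrib, sum_const, card_univ, ZMod.card]
    _ = 0 := by
        rw [Equiv.Perm.sum_comp_sub_eq_zero, nsmul_eq_mul, Nat.cast_mul, Nat.cast_ofNat,
          ZMod.natCast_self, mul_zero, zero_mul, sub_zero]

lemma card_sub_eq_ne_zero [NeZero k] (hcyc : ∃ i : ℕ, (σ ^ i) 0 = 1) (hb : Int.gcd b k ≠ 1) :
    Nat.card {v // σ v - v = a} ≠ 0 := by
  intro h0
  have hempty : IsEmpty {v // σ v - v = a} := Finite.card_eq_zero_iff.1 h0
  refine hb ((ZMod.isUnit_intCast_iff_gcd_eq_one b k).1 ?_)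
  exact isUnit_of_map_apply_eq_add (halfCast k) σ _
    (fun v => halfCast_apply_eq_add_of_ne harc fun hv => hempty.false ⟨v, hv⟩) hcyc

end Circuit

lemma card_sub_eq_ne_two_mul {k : ℕ} [NeZero k] {a : ℤ} {σ : Equiv.Perm (ZMod (2 * k))}
    (hcyc : ∃ i : ℕ, (σ ^ i) 0 = 1) (ha : Int.gcd a ((2 * k : ℕ) : ℤ) ≠ 1) :
    Nat.card {v // σ v - v = a} ≠ 2 * k := by
  intro h
  have hempty : IsEmpty {v // ¬ σ v - v = a} := Finite.card_eq_zero_iff.1 <| by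
    rw [Nat.card_subtype_not, h, Nat.card_zmod, Nat.sub_self]
  refine ha ((ZMod.isUnit_intCast_iff_gcd_eq_one a (2 * k)).1 ?_)
  refine isUnit_of_map_apply_eq_add (RingHom.id _) σ _ (fun v => ?_) hcyc
  by_contra hv
  exact hempty.false ⟨v, fun h => hv (by simp [← h])⟩

/-- Suppose `Cay(ℤ₂ₖ; a, b, b+k)` has a hamiltonian circuit `σ`,
`gcd(a−b, k) = 1`, `gcd(a, 2k) ≠ 1` and `gcd(b, k) ≠ 1`. Then exactly `k` vertices
travel by `a` and `k` vertices travel by `b` or `b+k`. -/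
theorem half_travel_by_a (k : ℕ) (hk : 1 ≤ k) (a b : ℤ)
    (σ : Equiv.Perm (ZMod (2 * k)))
    (harc : ∀ v : ZMod (2 * k), σ v - v ∈
      ({(a : ZMod (2 * k)), (b : ZMod (2 * k)),
        (b : ZMod (2 * k)) + ((k : ℕ) : ZMod (2 * k))} : Set (ZMod (2 * k))))
    (hcyc : ∀ v w : ZMod (2 * k), ∃ i : ℕ, (σ ^ i) v = w)
    (h1 : Int.gcd (a - b) (k : ℤ) = 1)
    (h2 : Int.gcd a ((2 * k : ℕ) : ℤ) ≠ 1)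
    (h3 : Int.gcd b (k : ℤ) ≠ 1) :
    Nat.card {v : ZMod (2 * k) // σ v - v = (a : ZMod (2 * k))} = k ∧
    Nat.card {v : ZMod (2 * k) // σ v - v = (b : ZMod (2 * k)) ∨
      σ v - v = (b : ZMod (2 * k)) + ((k : ℕ) : ZMod (2 * k))} = k := by
  have : NeZero k := ⟨by omega⟩
  have : Fact (1 < k) := ⟨by
    by_contra hk1
    obtain rfl : k = 1 := by omega
    exact h3 (Int.gcd_one_right b)⟩
  have hunit : IsUnit ((a - b : ℤ) : ZMod k) := (ZMod.isUnit_intCast_iff_gcd_eq_one _ _).2 h1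
  have hab : (a : ZMod k) ≠ b := sub_ne_zero.1 (by exact_mod_cast hunit.ne_zero)
  have hdvd : k ∣ Nat.card {v // σ v - v = a} :=
    (ZMod.natCast_eq_zero_iff _ _).1 (hunit.mul_left_eq_zero.1 (natCast_card_mul_sub_eq_zero harc))
  have hle : Nat.card {v // σ v - v = a} ≤ 2 * k :=
    (Finite.card_subtype_le _).trans (Nat.card_zmod _).le
  have hr : Nat.card {v // σ v - v = a} = k :=
    Nat.eq_of_dvd_of_lt_two_mul (card_sub_eq_ne_zero harc (hcyc 0 1) h3) hdvd
      (hle.lt_of_ne (card_sub_eq_ne_two_mul (hcyc 0 1) h2))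
  refine ⟨hr, ?_⟩
  rw [← Nat.card_congr (Equiv.subtypeEquivRight (sub_ne_iff_of_halfCast_ne harc hab)),
    Nat.card_subtype_not, Nat.card_zmod, hr]
  omega
end

section
/- Suppose Cay(ℤ₂ₖ; a, b, b+k) has a hamiltonian circuit H, gcd(a−b, k) = 1, gcd(a, 2k) ≠ 1, and gcd(b, k) ≠ 1. Then in each coset of the subgroup {0, k} of ℤ₂ₖ, exactly one of the two vertices travels by a and the other travels by b or b+k. -/
/-!
Call the coset `{i, i + k}` an *`a`-coset* if both its vertices travel by `a`, and a *`b`-coset*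
if neither does. If `{i, i + k}` is an `a`-coset, so is `{i + (a - b), i + (a - b) + k}`: a vertex
there travelling by `b` or `b + k` would land in `{i + a, i + a + k} = σ {i, i + k}`. Symmetrically,
`b`-cosets propagate by `b - a`. As `a - b` generates `ℤ₂ₖ / {0, k} ≅ ℤₖ`, a single `a`-coset
makes `σ` the translation by `a`, so `a` generates `ℤ₂ₖ`; a single `b`-coset makes `σ` act on `ℤₖ`
as the translation by `b`, so `b` generates `ℤₖ`. Both contradict the gcd hypotheses.
-/

open Equiv

section Pair

variable {G : Type*} [AddCommGroup G] {κ c e x y z : G}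

/-- When `κ + κ = 0`, `MemPair κ c` is the coset `c + {0, κ}`. -/
def MemPair (κ c x : G) : Prop := x = c ∨ x = c + κ

theorem memPair_add_self (κ c : G) : MemPair κ c (c + κ) := .inr rfl

theorem memPair_zero_sub_iff : MemPair κ 0 (x - c) ↔ MemPair κ c x := by
  simp only [MemPair, zero_add, sub_eq_iff_eq_add', add_zero]

theorem MemPair.symm (hκ : κ + κ = 0) (h : MemPair κ c x) : MemPair κ x c := by
  rcases h with rfl | rfl
  · exact .inl rfl
  · exact .inr (by rw [add_assoc, hκ, add_zero])

theorem MemPair.trans (hκ : κ + κ = 0) (hx : MemPair κ c x) (hy : MemPair κ x y) :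
    MemPair κ c y := by
  rcases hx with rfl | rfl <;> rcases hy with rfl | rfl
  · exact .inl rfl
  · exact .inr rfl
  · exact .inr rfl
  · exact .inl (by rw [add_assoc, hκ, add_zero])

theorem MemPair.add (hκ : κ + κ = 0) (hx : MemPair κ c x) (hy : MemPair κ e y) :
    MemPair κ (c + e) (x + y) := by
  rcases hx with rfl | rfl <;> rcases hy with rfl | rfl
  · exact .inl rfl
  · exact .inr (add_assoc ..).symm
  · exact .inr (add_right_comm ..)
  · exact .inl (by rw [add_add_add_comm, hκ, add_zero])

theorem MemPair.eq_or_eq_of_ne (hx : MemPair κ c x) (hy : MemPair κ c y) (hz : MemPair κ c z)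
    (hyz : y ≠ z) : x = y ∨ x = z := by
  unfold MemPair at *
  grind

theorem MemPair.map_eq {F Q : Type*} [AddGroup Q] [FunLike F G Q] [AddMonoidHomClass F G Q]
    {f : F} (hfκ : f κ = 0) (h : MemPair κ c x) : f x = f c := by
  rcases h with rfl | rfl
  · rfl
  · rw [map_add, hfκ, add_zero]

theorem forall_of_pair_step {P : G → Prop} {t : G}
    (hstep : ∀ i, P i → P (i + κ) → ∀ w, MemPair κ t (w - i) → P w)
    (hgen : ∀ u, ∃ n : ℕ, MemPair κ (n • t) u) {i : G} (hi : P i) (hiκ : P (i + κ)) (v : G) :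
    P v := by
  have chain : ∀ n : ℕ, P (i + n • t) ∧ P (i + n • t + κ) := by
    intro n
    induction n with
    | zero => simpa using ⟨hi, hiκ⟩
    | succ n ih =>
      refine ⟨hstep _ ih.1 ih.2 _ (.inl ?_), hstep _ ih.1 ih.2 _ (.inr ?_)⟩ <;>
        simp only [succ_nsmul] <;> abel
  obtain ⟨n, h | h⟩ := hgen (v - i) <;> rw [sub_eq_iff_eq_add'] at h <;> rw [h]
  · exact (chain n).1
  · exact add_assoc i _ κ ▸ (chain n).2

end Pair

section Travel

variable {G : Type*} [AddCommGroup G] {σ : Perm G} {κ a b c i w : G}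

def TravelsBy (σ : Perm G) (g v : G) : Prop := σ v - v = g

/-- Since `κ ≠ 0`, the images of `i` and `i + κ` are two distinct elements of `i + c + {0, κ}`,
so they exhaust it. -/
theorem memPair_of_apply_sub_memPair (hκ : κ + κ = 0) (hκ0 : κ ≠ 0)
    (hi : MemPair κ c (σ i - i)) (hiκ : MemPair κ c (σ (i + κ) - (i + κ)))
    (hw : MemPair κ c (σ w - i)) : MemPair κ i w := by
  have hiκ' : MemPair κ c (σ (i + κ) - i) := by
    simpa [sub_add_eq_add_sub, add_sub_add_right_eq_sub] using hiκ.add hκ (memPair_add_self κ 0)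
  have hne : σ i - i ≠ σ (i + κ) - i := by
    simpa using σ.injective.ne (by simpa using hκ0 : i ≠ i + κ)
  rcases hw.eq_or_eq_of_ne hi hiκ' hne with h | h
  · exact .inl (σ.injective (sub_left_inj.mp h))
  · exact .inr (σ.injective (sub_left_inj.mp h))

theorem travelsBy_of_memPair_sub (hκ : κ + κ = 0) (hκ0 : κ ≠ 0) (hab : ¬MemPair κ 0 (a - b))
    (harc : ∀ v, TravelsBy σ a v ∨ MemPair κ b (σ v - v))
    (hi : TravelsBy σ a i) (hiκ : TravelsBy σ a (i + κ)) (hw : MemPair κ (a - b) (w - i)) :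
    TravelsBy σ a w := by
  refine (harc w).resolve_right fun hb => hab ?_
  have hσw : MemPair κ a (σ w - i) := by simpa using hb.add hκ hw
  have hwi := memPair_of_apply_sub_memPair hκ hκ0 (.inl hi) (.inl hiκ) hσw
  exact (memPair_zero_sub_iff.mpr hwi).trans hκ (hw.symm hκ)

theorem memPair_apply_sub_of_memPair_sub (hκ : κ + κ = 0) (hκ0 : κ ≠ 0)
    (hba : ¬MemPair κ 0 (b - a)) (harc : ∀ v, TravelsBy σ a v ∨ MemPair κ b (σ v - v))
    (hi : MemPair κ b (σ i - i)) (hiκ : MemPair κ b (σ (i + κ) - (i + κ)))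
    (hw : MemPair κ (b - a) (w - i)) : MemPair κ b (σ w - w) := by
  refine (harc w).resolve_left fun ha => hba ?_
  have hσw : MemPair κ b (σ w - i) := by simpa using hw.add hκ (.inl ha : MemPair κ a (σ w - w))
  have hwi := memPair_of_apply_sub_memPair hκ hκ0 hi hiκ hσw
  exact (memPair_zero_sub_iff.mpr hwi).trans hκ (hw.symm hκ)

end Travel

theorem map_perm_pow_apply {G Q : Type*} [AddGroup G] [AddCommMonoid Q] {σ : Perm G}
    {π : G →+ Q} {c : Q} (h : ∀ v, π (σ v - v) = c) (n : ℕ) (v : G) :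
    π ((σ ^ n) v) = π v + n • c := by
  induction n with
  | zero => simp
  | succ n ih =>
    rw [pow_succ', Perm.mul_apply, ← sub_add_cancel (σ _) ((σ ^ n) v), map_add, h, ih, succ_nsmul]
    abel

theorem Int.gcd_eq_one_of_nsmul_intCast_eq_one {m n : ℕ} {c : ℤ} (h : n • (c : ZMod m) = 1) :
    Int.gcd c m = 1 := by
  rw [nsmul_eq_mul] at h
  rw [← Int.isCoprime_iff_gcd_eq_one, isCoprime_comm, ← ZMod.coe_int_isUnit_iff_isCoprime]
  exact IsUnit.of_mul_eq_one_right _ h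

theorem Int.gcd_eq_one_of_map_apply_sub_eq {R : Type*} [Ring R] {m : ℕ} (π : R →+* ZMod m)
    (σ : Perm R) {c : ℤ} (h : ∀ v, π (σ v - v) = c) (hcyc : ∃ n : ℕ, (σ ^ n) 0 = 1) :
    Int.gcd c m = 1 := by
  obtain ⟨n, hn⟩ := hcyc
  have := map_perm_pow_apply (π := π.toAddMonoidHom) h n 0
  simp only [RingHom.toAddMonoidHom_eq_coe, AddMonoidHom.coe_coe, hn, map_one, map_zero,
    zero_add] at this
  exact Int.gcd_eq_one_of_nsmul_intCast_eq_one this.symm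

theorem ZMod.natCast_add_self_eq_zero (k : ℕ) : (k : ZMod (2 * k)) + k = 0 := by
  have := ZMod.natCast_self (2 * k)
  push_cast at this
  linear_combination this

theorem ZMod.natCast_ne_zero_two_mul {k : ℕ} (hk : k ≠ 0) : (k : ZMod (2 * k)) ≠ 0 := by
  rw [Ne, ZMod.natCast_eq_zero_iff]
  intro h
  have := Nat.le_of_dvd (Nat.pos_of_ne_zero hk) h
  omega

/-- Bézout: if `x t + y k = 1` then `m = (m x) t + (m y) k`, and `(m y) k` is `0` or `k` in
`ZMod (2 * k)` according to the parity of `m y`. -/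
theorem ZMod.exists_memPair_nsmul_intCast (k : ℕ) [NeZero k] {t : ℤ} (ht : IsCoprime t k)
    (u : ZMod (2 * k)) : ∃ n : ℕ, MemPair (k : ZMod (2 * k)) (n • (t : ZMod (2 * k))) u := by
  obtain ⟨x, y, hxy⟩ := ht
  obtain ⟨m, rfl⟩ := ZMod.intCast_surjective u
  have hxy' : (x : ZMod (2 * k)) * t + y * k = 1 := by
    exact_mod_cast congrArg (Int.cast (R := ZMod (2 * k))) hxy
  refine ⟨((m * x : ℤ) : ZMod (2 * k)).val, ?_⟩
  rw [nsmul_eq_mul, ZMod.natCast_zmod_val]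
  obtain ⟨q, hq | hq⟩ := Int.even_or_odd' (m * y) <;>
    have hq' := congrArg (Int.cast (R := ZMod (2 * k))) hq <;> push_cast at hq' ⊢
  · left
    linear_combination
      -(m : ZMod (2 * k)) * hxy' + (k : ZMod (2 * k)) * hq' + q * ZMod.natCast_add_self_eq_zero k
  · right
    linear_combination
      -(m : ZMod (2 * k)) * hxy' + (k : ZMod (2 * k)) * hq' + q * ZMod.natCast_add_self_eq_zero k

theorem ZMod.not_memPair_zero_intCast {k : ℕ} (hk : k ≠ 1) {t : ℤ} (ht : IsCoprime t k) :
    ¬MemPair (k : ZMod (2 * k)) 0 (t : ZMod (2 * k)) := by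
  intro h
  have := h.map_eq (f := ZMod.castHom (dvd_mul_left k 2) (ZMod k)) (by simp)
  rw [map_intCast, map_zero, ZMod.intCast_zmod_eq_zero_iff_dvd] at this
  have := Int.isUnit_iff.mp (ht.isUnit_of_dvd' this dvd_rfl)
  omega

/-- Suppose `Cay(ℤ₂ₖ; a, b, b+k)` has a hamiltonian circuit `σ`,
`gcd(a−b, k) = 1`, `gcd(a, 2k) ≠ 1` and `gcd(b, k) ≠ 1`. Then in each coset
`{i, i+k}` of the subgroup `{0, k}`, exactly one of the two vertices travels by `a`
and the other travels by `b` or `b+k`. -/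
theorem coset_travel_pattern (k : ℕ) (hk : 1 ≤ k) (a b : ℤ)
    (σ : Equiv.Perm (ZMod (2 * k)))
    (harc : ∀ v : ZMod (2 * k), σ v - v ∈
      ({(a : ZMod (2 * k)), (b : ZMod (2 * k)),
        (b : ZMod (2 * k)) + ((k : ℕ) : ZMod (2 * k))} : Set (ZMod (2 * k))))
    (hcyc : ∀ v w : ZMod (2 * k), ∃ i : ℕ, (σ ^ i) v = w)
    (h1 : Int.gcd (a - b) (k : ℤ) = 1)
    (h2 : Int.gcd a ((2 * k : ℕ) : ℤ) ≠ 1)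
    (h3 : Int.gcd b (k : ℤ) ≠ 1) :
    ∀ i : ZMod (2 * k),
      (σ i - i = (a : ZMod (2 * k)) ∧
        (σ (i + ((k : ℕ) : ZMod (2 * k))) - (i + ((k : ℕ) : ZMod (2 * k))) = (b : ZMod (2 * k)) ∨
         σ (i + ((k : ℕ) : ZMod (2 * k))) - (i + ((k : ℕ) : ZMod (2 * k))) =
           (b : ZMod (2 * k)) + ((k : ℕ) : ZMod (2 * k)))) ∨
      ((σ i - i = (b : ZMod (2 * k)) ∨
          σ i - i = (b : ZMod (2 * k)) + ((k : ℕ) : ZMod (2 * k))) ∧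
        σ (i + ((k : ℕ) : ZMod (2 * k))) - (i + ((k : ℕ) : ZMod (2 * k))) =
          (a : ZMod (2 * k))) := by
  have hk1 : k ≠ 1 := by rintro rfl; simp at h3
  have : NeZero k := ⟨by omega⟩
  set κ : ZMod (2 * k) := ((k : ℕ) : ZMod (2 * k))
  have hκ : κ + κ = 0 := ZMod.natCast_add_self_eq_zero k
  have hκ0 : κ ≠ 0 := ZMod.natCast_ne_zero_two_mul (by omega)
  have hab_cop : IsCoprime (a - b) k := Int.isCoprime_iff_gcd_eq_one.mpr h1
  have hba_cop : IsCoprime (b - a) k := neg_sub a b ▸ hab_cop.neg_left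
  have hab := ZMod.not_memPair_zero_intCast hk1 hab_cop
  have hba := ZMod.not_memPair_zero_intCast hk1 hba_cop
  have hgen_ab := ZMod.exists_memPair_nsmul_intCast k hab_cop
  have hgen_ba := ZMod.exists_memPair_nsmul_intCast k hba_cop
  push_cast at hab hba hgen_ab hgen_ba
  have harc' : ∀ v, TravelsBy σ a v ∨ MemPair κ b (σ v - v) := by
    simpa [TravelsBy, MemPair] using harc
  have no_a_coset : ∀ i, TravelsBy σ a i → ¬TravelsBy σ a (i + κ) := fun i hi hiκ => by
    have hall := forall_of_pair_step
      (fun j hj hjκ w hw => travelsBy_of_memPair_sub hκ hκ0 hab harc' hj hjκ hw) hgen_ab hi hiκ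
    exact h2 (Int.gcd_eq_one_of_map_apply_sub_eq (RingHom.id _) σ hall (hcyc 0 1))
  have no_b_coset : ∀ i, MemPair κ b (σ i - i) → ¬MemPair κ b (σ (i + κ) - (i + κ)) :=
    fun i hi hiκ => by
    have hall := forall_of_pair_step
      (fun j hj hjκ w hw => memPair_apply_sub_of_memPair_sub hκ hκ0 hba harc' hj hjκ hw)
      hgen_ba hi hiκ
    refine h3 (Int.gcd_eq_one_of_map_apply_sub_eq (ZMod.castHom (dvd_mul_left k 2) (ZMod k)) σ
      (fun v => ?_) (hcyc 0 1))
    rw [(hall v).map_eq (by simp [κ]), map_intCast]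
  intro i
  rcases harc' i with hA | hB <;> rcases harc' (i + κ) with hA' | hB'
  · exact absurd hA' (no_a_coset i hA)
  · exact .inl ⟨hA, hB'⟩
  · exact .inr ⟨hB, hA'⟩
  · exact absurd hB' (no_b_coset i hB)
end

section
/- If Cay(ℤₖ; a, b) is connected (i.e., gcd(a, b, k) = 1), then Cay(ℤ₂ₖ; a, a+k, b, b+k) has a hamiltonian circuit, obtained by lifting an Euler circuit of Cay(ℤₖ; a, b). -/
open Equiv

namespace HamLift

variable {α : Type*}

/-- Forward reachability under a permutation. -/
def R (σ : Equiv.Perm α) (x y : α) : Prop := ∃ n : ℕ, (σ ^ n) x = y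

lemma R.rfl (σ : Equiv.Perm α) (x : α) : R σ x x := ⟨0, by simp⟩

lemma R.trans {σ : Equiv.Perm α} {x y z : α} (h1 : R σ x y) (h2 : R σ y z) : R σ x z := by
  obtain ⟨m, hm⟩ := h1; obtain ⟨n, hn⟩ := h2
  exact ⟨m + n, by rw [add_comm, pow_add, Equiv.Perm.mul_apply, hm, hn]⟩

lemma R.apply {σ : Equiv.Perm α} {x y : α} (h : R σ x y) : R σ x (σ y) := by
  obtain ⟨n, hn⟩ := h
  exact ⟨n + 1, by rw [pow_succ', Equiv.Perm.mul_apply, hn]⟩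

lemma R.symm [Finite α] {σ : Equiv.Perm α} {x y : α} (h : R σ x y) : R σ y x := by
  obtain ⟨n, hn⟩ := h
  refine ⟨n * (orderOf σ - 1), ?_⟩
  subst hn
  rw [← Equiv.Perm.mul_apply, ← pow_add]
  have hpos : 0 < orderOf σ := (isOfFinOrder_of_finite σ).orderOf_pos
  have hh : n * (orderOf σ - 1) + n = orderOf σ * n := by
    obtain ⟨m, hm⟩ := Nat.exists_eq_add_of_lt hpos
    rw [hm]
    simp only [Nat.zero_add, Nat.add_sub_cancel]
    ring
  rw [hh, pow_mul, pow_orderOf_eq_one, one_pow, Equiv.Perm.one_apply]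

/-- Merging two cycles by a swap. -/
lemma merge [Finite α] [DecidableEq α] (σ : Equiv.Perm α) (s₁ s₂ : α)
    (h : ¬ R σ s₁ s₂) (t : α) (ht : R σ s₁ t ∨ R σ s₂ t) :
    R (Equiv.swap s₁ s₂ * σ) s₁ t := by
  set σ' := Equiv.swap s₁ s₂ * σ with hσ'
  have horbit1 : ∀ n : ℕ, R σ' s₁ ((σ ^ n) s₁) := by
    intro n
    induction n with
    | zero => exact R.rfl _ _
    | succ n ih =>
      have hne2 : (σ ^ (n + 1)) s₁ ≠ s₂ := fun he => h ⟨n + 1, he⟩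
      by_cases h1 : (σ ^ (n + 1)) s₁ = s₁
      · rw [h1]; exact R.rfl _ _
      · have hs : σ ((σ ^ n) s₁) = (σ ^ (n + 1)) s₁ := by
          rw [pow_succ', Equiv.Perm.mul_apply]
        have hstep : σ' ((σ ^ n) s₁) = (σ ^ (n + 1)) s₁ := by
          rw [hσ', Equiv.Perm.mul_apply, hs, Equiv.swap_apply_of_ne_of_ne h1 hne2]
        rw [← hstep]; exact ih.apply
  have hNs : σ ((σ ^ (orderOf σ - 1)) s₁) = s₁ := by
    have hpos : 0 < orderOf σ := (isOfFinOrder_of_finite σ).orderOf_pos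
    rw [← Equiv.Perm.mul_apply, ← pow_succ']
    have hh : orderOf σ - 1 + 1 = orderOf σ := by omega
    rw [hh, pow_orderOf_eq_one, Equiv.Perm.one_apply]
  have hs2 : R σ' s₁ s₂ := by
    have hap := (horbit1 (orderOf σ - 1)).apply
    rwa [hσ', Equiv.Perm.mul_apply, hNs, Equiv.swap_apply_left, ← hσ'] at hap
  have horbit2 : ∀ n : ℕ, R σ' s₁ ((σ ^ n) s₂) := by
    intro n
    induction n with
    | zero => exact hs2
    | succ n ih =>
      have hne1 : (σ ^ (n + 1)) s₂ ≠ s₁ := by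
        intro he
        exact h (R.symm ⟨n + 1, he⟩)
      by_cases h2 : (σ ^ (n + 1)) s₂ = s₂
      · rw [h2]; exact hs2
      · have hs : σ ((σ ^ n) s₂) = (σ ^ (n + 1)) s₂ := by
          rw [pow_succ', Equiv.Perm.mul_apply]
        have hstep : σ' ((σ ^ n) s₂) = (σ ^ (n + 1)) s₂ := by
          rw [hσ', Equiv.Perm.mul_apply, hs, Equiv.swap_apply_of_ne_of_ne hne1 h2]
        rw [← hstep]; exact ih.apply
  rcases ht with ⟨n, hn⟩ | ⟨n, hn⟩
  · rw [← hn]; exact horbit1 n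
  · rw [← hn]; exact horbit2 n

section Main

variable (k : ℕ) [NeZero k] (a b : ℤ)

/-- the displacement property downstairs -/
def P (σ : Equiv.Perm (ZMod k × Bool)) : Prop :=
  ∀ x : ZMod k, (σ (x, false)).1 = x + (a : ZMod k) ∧ (σ (x, true)).1 = x + (b : ZMod k)

/-- swapping the two points of a fiber preserves first components -/
lemma swap_fst (x : ZMod k) (z : ZMod k × Bool) :
    ((Equiv.swap ((x : ZMod k), false) (x, true)) z).1 = z.1 := by
  rcases eq_or_ne z (x, false) with hz | hz
  · rw [hz, Equiv.swap_apply_left]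
  · rcases eq_or_ne z (x, true) with hz' | hz'
    · rw [hz', Equiv.swap_apply_right]
    · rw [Equiv.swap_apply_of_ne_of_ne hz hz']

lemma P_swap {σ : Equiv.Perm (ZMod k × Bool)} (hσ : P k a b σ) (x : ZMod k) :
    P k a b (Equiv.swap ((x : ZMod k), false) (x, true) * σ) := by
  intro y
  constructor
  · rw [Equiv.Perm.mul_apply, swap_fst]; exact (hσ y).1
  · rw [Equiv.Perm.mul_apply, swap_fst]; exact (hσ y).2

/-- base permutation -/
def σ₀ : Equiv.Perm (ZMod k × Bool) where
  toFun p := (p.1 + (if p.2 then (b : ZMod k) else (a : ZMod k)), p.2)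
  invFun p := (p.1 - (if p.2 then (b : ZMod k) else (a : ZMod k)), p.2)
  left_inv p := by simp
  right_inv p := by simp

lemma P_σ₀ : P k a b (σ₀ k a b) := by
  intro x
  constructor <;> simp [σ₀, Equiv.coe_fn_mk]

/-- closure lemma: a set containing 0 closed under +a and +b is everything -/
lemma closure (h : Nat.gcd (Int.gcd a b) k = 1) (V : Set (ZMod k))
    (h0 : (0 : ZMod k) ∈ V)
    (ha : ∀ x ∈ V, x + (a : ZMod k) ∈ V) (hb : ∀ x ∈ V, x + (b : ZMod k) ∈ V) :
    ∀ y : ZMod k, y ∈ V := by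
  have hA : ∀ x ∈ V, ∀ n : ℕ, x + n • (a : ZMod k) ∈ V := by
    intro x hx n
    induction n with
    | zero => simpa using hx
    | succ n ih =>
      have he : x + (n + 1) • (a : ZMod k) = x + n • (a : ZMod k) + (a : ZMod k) := by
        rw [succ_nsmul, add_assoc]
      rw [he]; exact ha _ ih
  have hB : ∀ x ∈ V, ∀ n : ℕ, x + n • (b : ZMod k) ∈ V := by
    intro x hx n
    induction n with
    | zero => simpa using hx
    | succ n ih =>
      have he : x + (n + 1) • (b : ZMod k) = x + n • (b : ZMod k) + (b : ZMod k) := by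
        rw [succ_nsmul, add_assoc]
      rw [he]; exact hb _ ih
  have bezout : ∃ u v : ℤ, (u : ZMod k) * (a : ZMod k) + (v : ZMod k) * (b : ZMod k) = 1 := by
    set g : ℕ := Int.gcd a b with hg
    have h1 : (g : ℤ) = a * Int.gcdA a b + b * Int.gcdB a b := Int.gcd_eq_gcd_ab a b
    have h2 : ((Nat.gcd g k : ℕ) : ℤ) = g * Nat.gcdA g k + k * Nat.gcdB g k :=
      Nat.gcd_eq_gcd_ab g k
    rw [h] at h2
    refine ⟨Int.gcdA a b * Nat.gcdA g k, Int.gcdB a b * Nat.gcdA g k, ?_⟩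
    have h3 : (1 : ℤ) = a * (Int.gcdA a b * Nat.gcdA g k)
        + b * (Int.gcdB a b * Nat.gcdA g k) + k * Nat.gcdB g k := by
      push_cast at h2
      rw [h1] at h2
      linarith [h2]
    have h4 : ((1 : ℤ) : ZMod k) = ((a * (Int.gcdA a b * Nat.gcdA g k)
        + b * (Int.gcdB a b * Nat.gcdA g k) + k * Nat.gcdB g k : ℤ) : ZMod k) :=
      congrArg _ h3
    push_cast at h4
    rw [ZMod.natCast_self] at h4
    push_cast
    linear_combination h4.symm
  obtain ⟨u, v, huv⟩ := bezout
  intro y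
  set n1 : ℕ := (y * (u : ZMod k)).val with hn1
  set n2 : ℕ := (y * (v : ZMod k)).val with hn2
  have step1 : (0 : ZMod k) + n1 • (a : ZMod k) ∈ V := hA 0 h0 n1
  have step2 : (0 : ZMod k) + n1 • (a : ZMod k) + n2 • (b : ZMod k) ∈ V := hB _ step1 n2
  have he : (0 : ZMod k) + n1 • (a : ZMod k) + n2 • (b : ZMod k) = y := by
    rw [zero_add, nsmul_eq_mul, nsmul_eq_mul, hn1, hn2, ZMod.natCast_rightInverse _,
      ZMod.natCast_rightInverse _]
    calc y * (u : ZMod k) * (a : ZMod k) + y * (v : ZMod k) * (b : ZMod k)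
        = y * ((u : ZMod k) * (a : ZMod k) + (v : ZMod k) * (b : ZMod k)) := by ring
      _ = y := by rw [huv, mul_one]
  rwa [he] at step2

/-- Main downstairs existence: a full-cycle permutation with property P. -/
lemma exists_full (h : Nat.gcd (Int.gcd a b) k = 1) :
    ∃ σ : Equiv.Perm (ZMod k × Bool), P k a b σ ∧ ∀ t, R σ ((0 : ZMod k), false) t := by
  classical
  set s₀ : ZMod k × Bool := ((0 : ZMod k), false) with hs₀
  suffices H : ∀ m : ℕ, ∀ σ : Equiv.Perm (ZMod k × Bool), P k a b σ →
      (Finset.univ.filter fun t => ¬ R σ s₀ t).card ≤ m →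
      ∃ σ' : Equiv.Perm (ZMod k × Bool), P k a b σ' ∧ ∀ t, R σ' s₀ t by
    exact H _ (σ₀ k a b) (P_σ₀ k a b) le_rfl
  intro m
  induction m with
  | zero =>
    intro σ hP hcard
    refine ⟨σ, hP, fun t => ?_⟩
    by_contra hnot
    have hmem : t ∈ Finset.univ.filter fun t => ¬ R σ s₀ t := by
      simp [hnot]
    have := Finset.card_pos.mpr ⟨t, hmem⟩
    omega
  | succ m ih =>
    intro σ hP hcard
    by_cases hall : ∀ t, R σ s₀ t
    · exact ⟨σ, hP, hall⟩
    have hsplit : ∃ x : ZMod k, ¬ (R σ s₀ (x, false) ↔ R σ s₀ (x, true)) := by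
      by_contra hno
      push_neg at hno
      have hiff : ∀ x : ZMod k, R σ s₀ (x, false) ↔ R σ s₀ (x, true) := fun x => hno x
      set V : Set (ZMod k) := {x | R σ s₀ (x, false)} with hV
      have h0 : (0 : ZMod k) ∈ V := R.rfl σ s₀
      have haV : ∀ x ∈ V, x + (a : ZMod k) ∈ V := by
        intro x hx
        have h1 : R σ s₀ (σ (x, false)) := R.apply hx
        have h2 : (σ (x, false)).1 = x + (a : ZMod k) := (hP x).1
        have he : σ (x, false) = (x + (a : ZMod k), (σ (x, false)).2) :=
          Prod.ext h2 rfl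
        rw [he] at h1
        rcases Bool.eq_false_or_eq_true (σ (x, false)).2 with hb2 | hb2 <;> rw [hb2] at h1
        · exact (hiff _).mpr h1
        · exact h1
      have hbV : ∀ x ∈ V, x + (b : ZMod k) ∈ V := by
        intro x hx
        have hx' : R σ s₀ (x, true) := (hiff x).mp hx
        have h1 : R σ s₀ (σ (x, true)) := R.apply hx'
        have h2 : (σ (x, true)).1 = x + (b : ZMod k) := (hP x).2
        have he : σ (x, true) = (x + (b : ZMod k), (σ (x, true)).2) :=
          Prod.ext h2 rfl
        rw [he] at h1
        rcases Bool.eq_false_or_eq_true (σ (x, true)).2 with hb2 | hb2 <;> rw [hb2] at h1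
        · exact (hiff _).mpr h1
        · exact h1
      have hVall := closure k a b h V h0 haV hbV
      apply hall
      intro t
      rcases Bool.eq_false_or_eq_true t.2 with hb2 | hb2
      · have h1 := (hiff t.1).mp (hVall t.1)
        have ht : t = (t.1, true) := Prod.ext rfl hb2
        rw [ht]; exact h1
      · have h1 := hVall t.1
        have ht : t = (t.1, false) := Prod.ext rfl hb2
        rw [ht]; exact h1
    obtain ⟨x, hx⟩ := hsplit
    have hcases : (R σ s₀ (x, false) ∧ ¬ R σ s₀ (x, true)) ∨
        (R σ s₀ (x, true) ∧ ¬ R σ s₀ (x, false)) := by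
      by_cases hf : R σ s₀ (x, false)
      · left
        refine ⟨hf, fun ht => hx ⟨fun _ => ht, fun _ => hf⟩⟩
      · right
        refine ⟨?_, hf⟩
        by_contra ht
        exact hx ⟨fun h' => absurd h' hf, fun h' => absurd h' ht⟩
    set σ' := Equiv.swap ((x : ZMod k), false) (x, true) * σ with hσ'
    have hP' : P k a b σ' := P_swap k a b hP x
    obtain ⟨s₁, s₂, hs₁, hs₂, hswap⟩ :
        ∃ s₁ s₂ : ZMod k × Bool, R σ s₀ s₁ ∧ ¬ R σ s₀ s₂ ∧
          σ' = Equiv.swap s₁ s₂ * σ := by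
      rcases hcases with ⟨h1, h2⟩ | ⟨h1, h2⟩
      · exact ⟨(x, false), (x, true), h1, h2, rfl⟩
      · exact ⟨(x, true), (x, false), h1, h2, by rw [hσ', Equiv.swap_comm]⟩
    have hne : ¬ R σ s₁ s₂ := fun hr => hs₂ (hs₁.trans hr)
    have hback : R σ' s₁ s₀ := by
      rw [hswap]; exact merge σ s₁ s₂ hne s₀ (Or.inl (R.symm hs₁))
    have hnew : ∀ t, R σ s₀ t → R σ' s₀ t := by
      intro t htr
      have h1 : R σ s₁ t := (R.symm hs₁).trans htr
      have h2 : R σ' s₁ t := by rw [hswap]; exact merge σ s₁ s₂ hne t (Or.inl h1)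
      exact (R.symm hback).trans h2
    have hnew2 : R σ' s₀ s₂ := by
      have h2 : R σ' s₁ s₂ := by
        rw [hswap]; exact merge σ s₁ s₂ hne s₂ (Or.inr (R.rfl σ s₂))
      exact (R.symm hback).trans h2
    apply ih σ' hP'
    have hsub : (Finset.univ.filter fun t => ¬ R σ' s₀ t) ⊆
        (Finset.univ.filter fun t => ¬ R σ s₀ t) := by
      intro t htf
      simp only [Finset.mem_filter, Finset.mem_univ, true_and] at htf ⊢
      exact fun hr => htf (hnew t hr)
    have hss : (Finset.univ.filter fun t => ¬ R σ' s₀ t) ⊂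
        (Finset.univ.filter fun t => ¬ R σ s₀ t) := by
      refine ⟨hsub, fun hsub' => ?_⟩
      have h1 : s₂ ∈ Finset.univ.filter fun t => ¬ R σ s₀ t := by simp [hs₂]
      have h2 := hsub' h1
      simp only [Finset.mem_filter, Finset.mem_univ, true_and] at h2
      exact h2 hnew2
    have := Finset.card_lt_card hss
    omega

end Main

section Lift

variable (k : ℕ) [NeZero k] [NeZero (2 * k)]

/-- the section ZMod k × Bool → ZMod (2k) -/
def sec (p : ZMod k × Bool) : ZMod (2 * k) :=
  ((p.1.val + cond p.2 k 0 : ℕ) : ZMod (2 * k))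

/-- the equivalence ZMod (2k) ≃ ZMod k × Bool -/
def eEquiv : ZMod (2 * k) ≃ ZMod k × Bool where
  toFun v := ((v.val : ZMod k), decide (k ≤ v.val))
  invFun := sec k
  left_inv := by
    intro v
    have hklt : 0 < k := Nat.pos_of_ne_zero (NeZero.ne k)
    have hv : v.val < 2 * k := ZMod.val_lt v
    simp only [sec, ZMod.val_natCast]
    by_cases hle : k ≤ v.val
    · have hmod : v.val % k = v.val - k := by
        rw [Nat.mod_eq_sub_mod hle, Nat.mod_eq_of_lt (by omega)]
      rw [hmod, decide_eq_true hle]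
      simp only [cond_true]
      have h2 : v.val - k + k = v.val := by omega
      rw [h2]
      exact ZMod.natCast_rightInverse v
    · have hmod : v.val % k = v.val := Nat.mod_eq_of_lt (by omega)
      rw [hmod, decide_eq_false hle]
      simp only [cond_false, Nat.add_zero]
      exact ZMod.natCast_rightInverse v
  right_inv := by
    intro p
    obtain ⟨x, ε⟩ := p
    have hklt : 0 < k := Nat.pos_of_ne_zero (NeZero.ne k)
    have hx : x.val < k := ZMod.val_lt x
    cases ε
    · have hval : (sec k (x, false)).val = x.val := by
        simp only [sec, cond_false, Nat.add_zero]
        rw [ZMod.val_natCast, Nat.mod_eq_of_lt (by omega)]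
      refine Prod.ext ?_ ?_
      · show (((sec k (x, false)).val : ℕ) : ZMod k) = x
        rw [hval]
        exact ZMod.natCast_rightInverse x
      · show decide (k ≤ (sec k (x, false)).val) = false
        rw [hval]
        exact decide_eq_false (by omega)
    · have hval : (sec k (x, true)).val = x.val + k := by
        simp only [sec, cond_true]
        rw [ZMod.val_natCast, Nat.mod_eq_of_lt (by omega)]
      refine Prod.ext ?_ ?_
      · show (((sec k (x, true)).val : ℕ) : ZMod k) = x
        rw [hval]
        push_cast
        rw [ZMod.natCast_self, add_zero]
        exact ZMod.natCast_rightInverse x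
      · show decide (k ≤ (sec k (x, true)).val) = true
        rw [hval]
        exact decide_eq_true (by omega)

lemma eEquiv_symm_apply (p : ZMod k × Bool) : (eEquiv k).symm p = sec k p := rfl

/-- difference of sections -/
lemma sec_diff (x y : ZMod k) (ε ε' : Bool) (c : ℤ) (hc : y = x + (c : ZMod k)) :
    sec k (y, ε') - sec k (x, ε) = (c : ZMod (2 * k)) ∨
    sec k (y, ε') - sec k (x, ε) = (c : ZMod (2 * k)) + ((k : ℕ) : ZMod (2 * k)) := by
  have hdvd : (k : ℤ) ∣ ((y.val : ℤ) - (x.val : ℤ) - c) := by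
    have hz : (((y.val : ℤ) - (x.val : ℤ) - c : ℤ) : ZMod k) = 0 := by
      push_cast
      rw [ZMod.natCast_rightInverse y, ZMod.natCast_rightInverse x, hc]
      ring
    exact (ZMod.intCast_zmod_eq_zero_iff_dvd _ k).mp hz
  obtain ⟨m, hm⟩ := hdvd
  set t : ℤ := m + (cond ε' 1 0) - (cond ε 1 0) with ht
  have hA : ((y.val : ℤ) + (cond ε' (k : ℤ) 0)) - ((x.val : ℤ) + cond ε (k : ℤ) 0)
      = c + k * t := by
    cases ε <;> cases ε' <;>
      simp only [ht, cond_true, cond_false] <;> linarith [hm]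
  have hsec : sec k (y, ε') - sec k (x, ε)
      = ((((y.val : ℤ) + cond ε' (k : ℤ) 0) - ((x.val : ℤ) + cond ε (k : ℤ) 0) : ℤ)
        : ZMod (2 * k)) := by
    simp only [sec]
    cases ε <;> cases ε' <;> simp only [cond_true, cond_false] <;> (push_cast; ring)
  have h2k : (2 : ZMod (2 * k)) * ((k : ℕ) : ZMod (2 * k)) = 0 := by
    have := ZMod.natCast_self (2 * k)
    push_cast at this
    linear_combination this
  rw [hsec, hA]
  rcases Int.even_or_odd t with ⟨u, hu⟩ | ⟨u, hu⟩
  · left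
    rw [hu]
    push_cast
    linear_combination (u : ZMod (2 * k)) * h2k
  · right
    rw [hu]
    push_cast
    linear_combination (u : ZMod (2 * k)) * h2k

lemma permCongr_pow (σ : Equiv.Perm (ZMod k × Bool)) (n : ℕ) (v : ZMod (2 * k)) :
    (((eEquiv k).symm.permCongr σ) ^ n) v = (eEquiv k).symm ((σ ^ n) (eEquiv k v)) := by
  induction n with
  | zero => simp
  | succ n ih =>
    rw [pow_succ', Equiv.Perm.mul_apply, ih, pow_succ', Equiv.Perm.mul_apply]
    rw [Equiv.permCongr_apply, Equiv.symm_symm, Equiv.apply_symm_apply]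

end Lift

end HamLift

/-- If `Cay(ℤₖ; a, b)` is connected, i.e. `gcd(a, b, k) = 1`, then
`Cay(ℤ₂ₖ; a, a+k, b, b+k)` has a hamiltonian circuit (obtained by lifting an Euler
circuit of `Cay(ℤₖ; a, b)`). -/
theorem ham_circuit_lift_euler (k : ℕ) (hk : 1 ≤ k) (a b : ℤ)
    (h : Nat.gcd (Int.gcd a b) k = 1) :
    ∃ σ : Equiv.Perm (ZMod (2 * k)),
      (∀ v : ZMod (2 * k), σ v - v ∈
        ({(a : ZMod (2 * k)), (a : ZMod (2 * k)) + ((k : ℕ) : ZMod (2 * k)),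
          (b : ZMod (2 * k)), (b : ZMod (2 * k)) + ((k : ℕ) : ZMod (2 * k))} :
          Set (ZMod (2 * k)))) ∧
      (∀ v w : ZMod (2 * k), ∃ i : ℕ, (σ ^ i) v = w) := by
  haveI : NeZero k := ⟨by omega⟩
  haveI : NeZero (2 * k) := ⟨by omega⟩
  obtain ⟨σ, hP, hfull⟩ := HamLift.exists_full k a b h
  set e := HamLift.eEquiv k with he
  refine ⟨e.symm.permCongr σ, ?_, ?_⟩
  · intro v
    have hv : v = HamLift.sec k (e v) := by
      rw [← HamLift.eEquiv_symm_apply, ← he, Equiv.symm_apply_apply]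
    have happ : (e.symm.permCongr σ) v = HamLift.sec k (σ (e v)) := by
      rw [Equiv.permCongr_apply, Equiv.symm_symm, ← HamLift.eEquiv_symm_apply, he]
    set p := e v with hp
    have hv2 : (e.symm.permCongr σ) v - v = HamLift.sec k (σ p) - HamLift.sec k p := by
      rw [happ]
      congr 1
    rw [hv2]
    simp only [Set.mem_insert_iff, Set.mem_singleton_iff]
    rcases Bool.eq_false_or_eq_true p.2 with hb2 | hb2
    · -- b step
      have hpe : p = (p.1, true) := Prod.ext rfl hb2
      have h2 : (σ p).1 = p.1 + (b : ZMod k) := by rw [hpe]; exact (hP p.1).2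
      have hd := HamLift.sec_diff k p.1 (σ p).1 p.2 (σ p).2 b h2
      rcases hd with hd | hd
      · right; right; left; exact hd
      · right; right; right; exact hd
    · -- a step
      have hpe : p = (p.1, false) := Prod.ext rfl hb2
      have h2 : (σ p).1 = p.1 + (a : ZMod k) := by rw [hpe]; exact (hP p.1).1
      have hd := HamLift.sec_diff k p.1 (σ p).1 p.2 (σ p).2 a h2
      rcases hd with hd | hd
      · left; exact hd
      · right; left; exact hd
  · intro v w
    have h1 := hfull (e v)
    have h2 := hfull (e w)
    have h3 : HamLift.R σ (e v) (e w) := (HamLift.R.symm h1).trans h2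
    obtain ⟨n, hn⟩ := h3
    refine ⟨n, ?_⟩
    rw [HamLift.permCongr_pow, ← he, hn, Equiv.symm_apply_apply]
end
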